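/- arXiv:2502.08143 — 14 statements merged into one kernel-verified Lean document; each statement's English description precedes it below -/
import Mathlib

section
/- Let T ≥ 1 be an integer, let z_1,…,z_T be nonnegative reals, h_1,…,h_T be positive reals, let β_1 > 0, and define β_{t+1} = β_t + z_t/(β_t·h_t) for t = 1,…,T. Then Σ_{t=1}^T z_t/β_t ≤ Σ_{t=1}^T z_t/√(Σ_{s=1}^t z_s/h_s) + (max_{t∈[T]} z_t/β_t) · (1/ln 2) · ln(1 + (2/β_1²)·Σ_{t=1}^T z_t/h_t), with the convention that a summand z_t/√(Σ_{s=1}^t z_s/h_s) is 0 whenever its denominator is 0 (which can happen only if z_t = 0). -/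
/-- **Real-time SPM key lemma (Lemma 1).**
Let `T ≥ 1`, `z₁,…,z_T ≥ 0`, `h₁,…,h_T > 0`, `β₁ > 0`, and
`β_{t+1} = β_t + z_t/(β_t h_t)` for `t ∈ [T]`.  Then
`∑ z_t/β_t ≤ ∑ z_t/√(∑_{s≤t} z_s/h_s)
  + (max_t z_t/β_t) · (1/ln 2) · ln(1 + (2/β₁²) ∑ z_t/h_t)`.
(In Lean, division by zero is `0`, which realizes the convention that a summand
`z_t/√(∑_{s≤t} z_s/h_s)` is `0` whenever its denominator vanishes.) -/
theorem stmt0 (T : ℕ) (hT : 1 ≤ T) (z h β : ℕ → ℝ)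
    (hz : ∀ t ∈ Finset.Icc 1 T, 0 ≤ z t)
    (hh : ∀ t ∈ Finset.Icc 1 T, 0 < h t)
    (hβ1 : 0 < β 1)
    (hrec : ∀ t ∈ Finset.Icc 1 T, β (t + 1) = β t + z t / (β t * h t)) :
    ∑ t ∈ Finset.Icc 1 T, z t / β t ≤
      (∑ t ∈ Finset.Icc 1 T, z t / Real.sqrt (∑ s ∈ Finset.Icc 1 t, z s / h s)) +
        ((Finset.Icc 1 T).sup' (Finset.nonempty_Icc.mpr hT) (fun t => z t / β t)) *
          (1 / Real.log 2) *
          Real.log (1 + (2 / (β 1) ^ 2) * ∑ t ∈ Finset.Icc 1 T, z t / h t) := by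
  classical
  set S : ℕ → ℝ := fun t => ∑ s ∈ Finset.Icc 1 t, z s / h s with hSdef
  -- positivity of β on [1, T+1]
  have hβpos : ∀ t, 1 ≤ t → t ≤ T + 1 → 0 < β t := by
    intro t
    induction t with
    | zero => intro h1 _; exact absurd h1 (by omega)
    | succ n ih =>
      intro _ h2
      rcases Nat.lt_or_ge n 1 with hn | hn
      · have hn0 : n = 0 := by omega
        subst hn0; exact hβ1
      · have hmem : n ∈ Finset.Icc 1 T := Finset.mem_Icc.mpr ⟨hn, by omega⟩
        have hβn := ih hn (by omega)
        have hd : 0 ≤ z n / (β n * h n) :=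
          div_nonneg (hz n hmem) (mul_pos hβn (hh n hmem)).le
        rw [hrec n hmem]; linarith
  have hSzero : S 0 = 0 := by
    simp only [hSdef]
    rw [Finset.Icc_eq_empty (by omega)]
    simp
  have hSsucc : ∀ n, S (n + 1) = S n + z (n + 1) / h (n + 1) := by
    intro n
    simp only [hSdef]
    exact Finset.sum_Icc_succ_top (by omega) _
  have hSnonneg : ∀ t, t ≤ T → 0 ≤ S t := by
    intro t ht
    simp only [hSdef]
    apply Finset.sum_nonneg
    intro s hs
    have hsm : s ∈ Finset.Icc 1 T := by
      simp only [Finset.mem_Icc] at hs ⊢; omega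
    exact div_nonneg (hz s hsm) (hh s hsm).le
  -- key recurrence bound: β_{t+1}² ≥ β₁² + 2 S_t
  have hβsq : ∀ t, t ≤ T → β 1 ^ 2 + 2 * S t ≤ β (t + 1) ^ 2 := by
    intro t
    induction t with
    | zero => intro _; rw [hSzero]; norm_num
    | succ n ih =>
      intro h2
      have hmem : n + 1 ∈ Finset.Icc 1 T := Finset.mem_Icc.mpr ⟨by omega, h2⟩
      have hβn : 0 < β (n + 1) := hβpos (n + 1) (by omega) (by omega)
      have hhpos := hh _ hmem
      have hzn := hz _ hmem
      have hIH := ih (by omega)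
      have hq : β (n + 1) * (z (n + 1) / (β (n + 1) * h (n + 1))) = z (n + 1) / h (n + 1) := by
        rw [mul_comm (β (n+1)) (h (n+1)), ← div_div]
        field_simp
      have hs : 0 ≤ (z (n + 1) / (β (n + 1) * h (n + 1))) ^ 2 := sq_nonneg _
      rw [hSsucc n, hrec _ hmem]
      nlinarith [hq, hs, hIH]
  set P : ℕ → Prop := fun t => S t ≤ β t ^ 2 with hPdef
  -- counting lemma
  have hcount : ∀ n, n ≤ T →
      β 1 ^ 2 * ((2 : ℝ) ^ ((Finset.Icc 1 n).filter (fun t => ¬ P t)).card - 1) ≤ S n := by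
    intro n
    induction n with
    | zero =>
      intro _
      rw [hSzero, Finset.Icc_eq_empty (by omega)]
      simp
    | succ n ih =>
      intro h2
      have hIH := ih (by omega)
      have hmem : n + 1 ∈ Finset.Icc 1 T := Finset.mem_Icc.mpr ⟨by omega, h2⟩
      have hstep : Finset.Icc 1 (n + 1) = insert (n + 1) (Finset.Icc 1 n) := by
        exact (Finset.insert_Icc_right_eq_Icc_add_one (by omega)).symm
      have hzn : 0 ≤ z (n + 1) / h (n + 1) := div_nonneg (hz _ hmem) (hh _ hmem).le
      by_cases hp : P (n + 1)
      · have heq : ((Finset.Icc 1 (n + 1)).filter (fun t => ¬ P t)) =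
            ((Finset.Icc 1 n).filter (fun t => ¬ P t)) := by
          rw [hstep, Finset.filter_insert, if_neg (by simp [hp])]
        rw [heq, hSsucc]
        linarith
      · have hins : ((Finset.Icc 1 (n + 1)).filter (fun t => ¬ P t)) =
            insert (n + 1) ((Finset.Icc 1 n).filter (fun t => ¬ P t)) := by
          rw [hstep, Finset.filter_insert, if_pos hp]
        have hnot : (n + 1) ∉ (Finset.Icc 1 n).filter (fun t => ¬ P t) := by
          simp only [Finset.mem_filter, Finset.mem_Icc]
          omega
        rw [hins, Finset.card_insert_of_notMem hnot, hSsucc]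
        have hβb := hβsq n (by omega)
        have hlt : β (n + 1) ^ 2 < S (n + 1) := by
          simp only [hPdef] at hp
          push_neg at hp
          exact hp
        rw [hSsucc] at hlt
        have hpow : (2:ℝ) ^ (((Finset.Icc 1 n).filter (fun t => ¬ P t)).card + 1) =
            (2:ℝ) ^ ((Finset.Icc 1 n).filter (fun t => ¬ P t)).card * 2 :=
          pow_succ 2 _
        nlinarith [hIH, hβb, hlt, hzn, hpow]
  set M := (Finset.Icc 1 T).sup' (Finset.nonempty_Icc.mpr hT) (fun t => z t / β t) with hM
  have hMnonneg : 0 ≤ M := by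
    have h1 : z 1 / β 1 ≤ M :=
      Finset.le_sup' (fun t => z t / β t) (Finset.mem_Icc.mpr ⟨le_rfl, hT⟩)
    have h2 : 0 ≤ z 1 / β 1 :=
      div_nonneg (hz 1 (Finset.mem_Icc.mpr ⟨le_rfl, hT⟩)) hβ1.le
    linarith
  -- bound over the "good" set A
  have hAbound : ∑ t ∈ (Finset.Icc 1 T).filter P, z t / β t ≤
      ∑ t ∈ Finset.Icc 1 T, z t / Real.sqrt (S t) := by
    refine le_trans (Finset.sum_le_sum ?_)
      (Finset.sum_le_sum_of_subset_of_nonneg (Finset.filter_subset _ _) ?_)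
    · intro t ht
      have htIcc : t ∈ Finset.Icc 1 T := Finset.mem_of_mem_filter t ht
      have hPt : S t ≤ β t ^ 2 := (Finset.mem_filter.mp ht).2
      have hβt : 0 < β t := hβpos t (Finset.mem_Icc.mp htIcc).1
        (by have := (Finset.mem_Icc.mp htIcc).2; omega)
      rcases eq_or_lt_of_le (hz t htIcc) with hz0 | hz0
      · rw [← hz0]; simp
      · have hSt : 0 < S t := by
          have h1 : z t / h t ≤ S t := by
            simp only [hSdef]
            refine Finset.single_le_sum (f := fun s => z s / h s) ?_ ?_
            · intro s hs
              have hsm : s ∈ Finset.Icc 1 T := by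
                simp only [Finset.mem_Icc] at hs htIcc ⊢; omega
              exact div_nonneg (hz s hsm) (hh s hsm).le
            · exact Finset.mem_Icc.mpr ⟨(Finset.mem_Icc.mp htIcc).1, le_rfl⟩
          have h2 : 0 < z t / h t := div_pos hz0 (hh t htIcc)
          linarith
        have hsqrt : Real.sqrt (S t) ≤ β t := by
          have : β t = Real.sqrt (β t ^ 2) := (Real.sqrt_sq hβt.le).symm
          rw [this]
          exact Real.sqrt_le_sqrt hPt
        exact div_le_div_of_nonneg_left hz0.le (Real.sqrt_pos.mpr hSt) hsqrt
    · intro t ht _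
      exact div_nonneg (hz t ht) (Real.sqrt_nonneg _)
  -- bound over the "bad" set B
  set B := (Finset.Icc 1 T).filter (fun t => ¬ P t) with hB
  have hBbound : ∑ t ∈ B, z t / β t ≤ (B.card : ℝ) * M := by
    have hle : ∀ t ∈ B, z t / β t ≤ M := by
      intro t ht
      exact Finset.le_sup' (fun t => z t / β t) (Finset.mem_of_mem_filter t ht)
    have := Finset.sum_le_card_nsmul B (fun t => z t / β t) M hle
    simpa [nsmul_eq_mul] using this
  have hlog2 : 0 < Real.log 2 := Real.log_pos (by norm_num)
  have hβ1sq : 0 < β 1 ^ 2 := by positivity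
  -- log bound on |B|
  have hk : (B.card : ℝ) * Real.log 2 ≤ Real.log (1 + 2 / β 1 ^ 2 * S T) := by
    have key : (2 : ℝ) ^ B.card ≤ 1 + 2 / β 1 ^ 2 * S T := by
      have h1 : ((2 : ℝ) ^ B.card - 1) ≤ 2 * S T / β 1 ^ 2 := by
        rw [le_div_iff₀ hβ1sq]
        nlinarith [hcount T le_rfl, hSnonneg T le_rfl]
      have h2 : 2 / β 1 ^ 2 * S T = 2 * S T / β 1 ^ 2 := by ring
      linarith
    calc (B.card : ℝ) * Real.log 2 = Real.log ((2 : ℝ) ^ B.card) := by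
          rw [Real.log_pow]
      _ ≤ Real.log (1 + 2 / β 1 ^ 2 * S T) := Real.log_le_log (by positivity) key
  have hfinal : (B.card : ℝ) * M ≤ M * (1 / Real.log 2) * Real.log (1 + 2 / β 1 ^ 2 * S T) := by
    have hkk : (B.card : ℝ) ≤ 1 / Real.log 2 * Real.log (1 + 2 / β 1 ^ 2 * S T) := by
      rw [div_mul_eq_mul_div, one_mul, le_div_iff₀ hlog2]
      exact hk
    calc (B.card : ℝ) * M = M * (B.card : ℝ) := mul_comm _ _
      _ ≤ M * (1 / Real.log 2 * Real.log (1 + 2 / β 1 ^ 2 * S T)) :=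
          mul_le_mul_of_nonneg_left hkk hMnonneg
      _ = M * (1 / Real.log 2) * Real.log (1 + 2 / β 1 ^ 2 * S T) := by ring
  have hsplit : ∑ t ∈ (Finset.Icc 1 T).filter P, z t / β t + ∑ t ∈ B, z t / β t =
      ∑ t ∈ Finset.Icc 1 T, z t / β t := by
    simp only [hB]
    exact Finset.sum_filter_add_sum_filter_not _ _ _
  show ∑ t ∈ Finset.Icc 1 T, z t / β t ≤
      (∑ t ∈ Finset.Icc 1 T, z t / Real.sqrt (S t)) +
        M * (1 / Real.log 2) * Real.log (1 + 2 / β 1 ^ 2 * S T)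
  linarith
end

section
/- Let K ≥ 2, α ∈ (0,1), γ > 0, 0 < β ≤ β', d ≥ 2 and L ∈ ℝ^K. Suppose x minimizes F_{L,β,γ} and y minimizes F_{L,β',γ}. If β' − β ≤ (1 − 1/d)·γ·x_*^{−α}, then y_i ≤ d·x_i for all i ∈ [K]. -/
open Finset

/-- The hybrid FTRL objective
`F_{L,β,γ}(p) = ⟨L,p⟩ + (β/α)(1 − Σᵢ pᵢ^α) − γ Σᵢ ln pᵢ`. -/
noncomputable def hybridF {K : ℕ} (α β γ : ℝ) (L p : Fin K → ℝ) : ℝ :=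
  (∑ i, L i * p i) + (β / α) * (1 - ∑ i, p i ^ α) - γ * ∑ i, Real.log (p i)

/-- The positive probability simplex. -/
def posSimplex {K : ℕ} (p : Fin K → ℝ) : Prop :=
  (∀ i, 0 < p i) ∧ ∑ i, p i = 1

/-- `x` minimizes `F_{L,β,γ}` over the positive simplex. -/
def MinimizesF {K : ℕ} (α β γ : ℝ) (L x : Fin K → ℝ) : Prop :=
  posSimplex x ∧ ∀ p : Fin K → ℝ, posSimplex p → hybridF α β γ L x ≤ hybridF α β γ L p

/-- `x_* = min(maxᵢ xᵢ, 1 − maxᵢ xᵢ)`. -/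
noncomputable def vecStar {K : ℕ} (x : Fin K → ℝ) : ℝ :=
  min (⨆ i, x i) (1 - ⨆ i, x i)

lemma kkt_pair {K : ℕ} {α β γ : ℝ} (hα : α ∈ Set.Ioo (0:ℝ) 1)
    (L x : Fin K → ℝ) (hx : MinimizesF α β γ L x) {j k : Fin K} (hjk : j ≠ k) :
    L j - β * x j ^ (α - 1) - γ / x j = L k - β * x k ^ (α - 1) - γ / x k := by
  obtain ⟨⟨hpos, hsum⟩, hmin⟩ := hx
  have hαne : α ≠ 0 := ne_of_gt hα.1
  set E : Finset (Fin K) := (univ.erase j).erase k with hE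
  have hkmem : k ∈ univ.erase j := Finset.mem_erase.mpr ⟨Ne.symm hjk, mem_univ k⟩
  have hsplit : ∀ f : Fin K → ℝ, ∑ i, f i = f j + (f k + ∑ i ∈ E, f i) := by
    intro f
    rw [hE, Finset.add_sum_erase _ f hkmem, Finset.add_sum_erase _ f (mem_univ j)]
  set p : ℝ → Fin K → ℝ :=
    fun t i => if i = j then x j + t else if i = k then x k - t else x i with hp
  have hpj : ∀ t, p t j = x j + t := by intro t; simp [hp]
  have hpk : ∀ t, p t k = x k - t := by intro t; simp [hp, Ne.symm hjk]
  have hpE : ∀ t, ∀ i ∈ E, p t i = x i := by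
    intro t i hi
    obtain ⟨hik, hij⟩ := Finset.mem_erase.mp hi
    obtain ⟨hij', _⟩ := Finset.mem_erase.mp hij
    simp [hp, hij', hik]
  have key : ∀ (t : ℝ) (g : Fin K → ℝ → ℝ), ∑ i, g i (p t i) =
      g j (x j + t) + (g k (x k - t) + ∑ i ∈ E, g i (x i)) := by
    intro t g
    rw [hsplit (fun i => g i (p t i)), hpj, hpk]
    congr 2
    exact Finset.sum_congr rfl fun i hi => by rw [hpE t i hi]
  set C1 : ℝ := ∑ i ∈ E, L i * x i
  set C2 : ℝ := ∑ i ∈ E, x i ^ α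
  set C3 : ℝ := ∑ i ∈ E, Real.log (x i)
  set φ : ℝ → ℝ := fun t =>
    (L j * (x j + t) + (L k * (x k - t) + C1)) +
      (β / α) * (1 - ((x j + t) ^ α + ((x k - t) ^ α + C2))) -
      γ * (Real.log (x j + t) + (Real.log (x k - t) + C3)) with hφdef
  have hφ : ∀ t, hybridF α β γ L (p t) = φ t := by
    intro t
    unfold hybridF
    rw [key t (fun i v => L i * v), key t (fun i v => v ^ α), key t (fun i v => Real.log v)]
  have hp0 : p 0 = x := by
    funext i
    by_cases h1 : i = j
    · simp [hp, h1]
    · by_cases h2 : i = k <;> simp [hp, h1, h2, Ne.symm hjk]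
  have hloc : IsLocalMin φ 0 := by
    have hmem : Set.Ioo (-x j) (x k) ∈ nhds (0:ℝ) :=
      Ioo_mem_nhds (by linarith [hpos j]) (hpos k)
    filter_upwards [hmem] with t ht
    have hps : posSimplex (p t) := by
      constructor
      · intro i
        by_cases h1 : i = j
        · rw [h1, hpj]; linarith [ht.1]
        · by_cases h2 : i = k
          · rw [h2, hpk]; linarith [ht.2]
          · simpa [hp, h1, h2] using hpos i
      · rw [key t (fun _ v => v)]
        have := hsplit x
        rw [hsum] at this
        linarith
    have h := hmin (p t) hps
    rw [hφ t] at h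
    rw [← hp0, hφ 0] at h
    exact h
  have hxj0 : x j + 0 ≠ 0 := by simpa using (hpos j).ne'
  have hxk0 : x k - 0 ≠ 0 := by simpa using (hpos k).ne'
  have hd1 : HasDerivAt (fun t : ℝ => x j + t) 1 0 := (hasDerivAt_id 0).const_add (x j)
  have hd2 : HasDerivAt (fun t : ℝ => x k - t) (-1) 0 := (hasDerivAt_id 0).const_sub (x k)
  have hpow1 : HasDerivAt (fun t : ℝ => (x j + t) ^ α) (α * x j ^ (α - 1)) 0 := by
    have h := (Real.hasDerivAt_rpow_const (x := x j + 0) (p := α) (Or.inl hxj0)).comp 0 hd1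
    simpa [Function.comp_def] using h
  have hpow2 : HasDerivAt (fun t : ℝ => (x k - t) ^ α) (-(α * x k ^ (α - 1))) 0 := by
    have h := (Real.hasDerivAt_rpow_const (x := x k - 0) (p := α) (Or.inl hxk0)).comp 0 hd2
    simpa [Function.comp_def] using h
  have hlog1 : HasDerivAt (fun t : ℝ => Real.log (x j + t)) (x j)⁻¹ 0 := by
    have h := (Real.hasDerivAt_log hxj0).comp 0 hd1
    simpa [Function.comp_def] using h
  have hlog2 : HasDerivAt (fun t : ℝ => Real.log (x k - t)) (-(x k)⁻¹) 0 := by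
    have h := (Real.hasDerivAt_log hxk0).comp 0 hd2
    simpa [Function.comp_def] using h
  have T1 : HasDerivAt (fun t : ℝ => L j * (x j + t) + (L k * (x k - t) + C1))
      (L j - L k) 0 := by
    have h := (hd1.const_mul (L j)).add ((hd2.const_mul (L k)).add_const C1)
    refine h.congr_deriv ?_
    ring
  have T2 : HasDerivAt (fun t : ℝ => (β / α) * (1 - ((x j + t) ^ α + ((x k - t) ^ α + C2))))
      ((β / α) * (-(α * x j ^ (α - 1)) + (α * x k ^ (α - 1)))) 0 := by
    have h := ((hpow1.add (hpow2.add_const C2)).const_sub 1).const_mul (β / α)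
    refine h.congr_deriv ?_
    ring
  have T3 : HasDerivAt (fun t : ℝ => γ * (Real.log (x j + t) + (Real.log (x k - t) + C3)))
      (γ * ((x j)⁻¹ - (x k)⁻¹)) 0 := by
    have h := (hlog1.add (hlog2.add_const C3)).const_mul γ
    refine h.congr_deriv ?_
    ring
  have hφ' : HasDerivAt φ
      ((L j - L k) + (β / α) * (-(α * x j ^ (α - 1)) + (α * x k ^ (α - 1)))
        - γ * ((x j)⁻¹ - (x k)⁻¹)) 0 := (T1.add T2).sub T3
  have h0 := hloc.hasDerivAt_eq_zero hφ'
  have e1 : (β / α) * (-(α * x j ^ (α - 1)) + (α * x k ^ (α - 1)))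
      = -(β * x j ^ (α - 1)) + β * x k ^ (α - 1) := by
    field_simp
  rw [e1] at h0
  rw [div_eq_mul_inv γ (x j), div_eq_mul_inv γ (x k)]
  nlinarith [h0]

/-- **Stability of the FTRL minimizer under a learning-rate increase (Lemma 5).**
If `x`, `y` minimize `F_{L,β,γ}`, `F_{L,β',γ}` with `0 < β ≤ β'`, `d ≥ 2` and
`β' − β ≤ (1 − 1/d)·γ·x_*^{−α}`, then `yᵢ ≤ d·xᵢ` for all `i`. -/
theorem stmt1 {K : ℕ} (hK : 2 ≤ K) {α γ β β' d : ℝ}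
    (hα : α ∈ Set.Ioo (0:ℝ) 1) (hγ : 0 < γ) (hβ : 0 < β) (hββ' : β ≤ β')
    (hd : 2 ≤ d) (L x y : Fin K → ℝ)
    (hx : MinimizesF α β γ L x) (hy : MinimizesF α β' γ L y)
    (hgap : β' - β ≤ (1 - 1 / d) * γ * (vecStar x) ^ (-α)) :
    ∀ i, y i ≤ d * x i := by
  obtain ⟨hα0, hα1⟩ := hα
  have hd0 : (0:ℝ) < d := by linarith
  have hxpos := hx.1.1
  have hxsum := hx.1.2
  have hypos := hy.1.1
  have hysum := hy.1.2
  intro j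
  by_contra hcon
  push_neg at hcon
  have hxj := hxpos j
  have hyj := hypos j
  have hxyj : x j < y j := by nlinarith
  have hk : ∃ k, y k < x k := by
    by_contra hc
    push_neg at hc
    have hlt : ∑ i, x i < ∑ i, y i :=
      Finset.sum_lt_sum (fun i _ => hc i) ⟨j, Finset.mem_univ j, hxyj⟩
    rw [hxsum, hysum] at hlt
    exact lt_irrefl 1 hlt
  obtain ⟨k, hky⟩ := hk
  have hjk : j ≠ k := by rintro rfl; linarith
  have hxk := hxpos k
  have hyk := hypos k
  have e1 := kkt_pair ⟨hα0, hα1⟩ L x hx hjk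
  have e2 := kkt_pair ⟨hα0, hα1⟩ L y hy hjk
  have hE : β * x j ^ (α-1) + γ / x j - (β' * y j ^ (α-1) + γ / y j)
      = β * x k ^ (α-1) + γ / x k - (β' * y k ^ (α-1) + γ / y k) := by linarith
  have hαm : α - 1 < 0 := by linarith
  -- RHS ≤ 0
  have r1 : x k ^ (α-1) < y k ^ (α-1) := Real.rpow_lt_rpow_of_neg hyk hky hαm
  have r2 : (0:ℝ) < y k ^ (α-1) := Real.rpow_pos_of_pos hyk _
  have r3 : γ / x k ≤ γ / y k := by
    rw [div_le_div_iff₀ hxk hyk]; nlinarith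
  have hRHS : β * x k ^ (α-1) + γ / x k - (β' * y k ^ (α-1) + γ / y k) ≤ 0 := by
    nlinarith [mul_le_mul_of_nonneg_right hββ' r2.le, mul_lt_mul_of_pos_left r1 hβ]
  -- x j ≤ vecStar x, vecStar x > 0
  have hKpos : 0 < K := by omega
  haveI : Nonempty (Fin K) := ⟨⟨0, hKpos⟩⟩
  obtain ⟨m, hm⟩ := Finite.exists_max x
  have hsupeq : (⨆ i, x i) = x m :=
    le_antisymm (ciSup_le hm) (le_ciSup (Set.Finite.bddAbove (Set.finite_range x)) m)
  obtain ⟨i0, hi0⟩ := Fintype.exists_ne_of_one_lt_card (by simp [Fintype.card_fin]; omega) m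
  have hpair : ∀ a b : Fin K, a ≠ b → x a + x b ≤ 1 := by
    intro a b hab
    have h1 : ∑ i ∈ ({a, b} : Finset (Fin K)), x i ≤ ∑ i, x i :=
      Finset.sum_le_sum_of_subset_of_nonneg (Finset.subset_univ _)
        (fun i _ _ => (hxpos i).le)
    rw [Finset.sum_pair hab, hxsum] at h1
    exact h1
  have h1m : 0 < 1 - x m := by linarith [hpair i0 m hi0, hxpos i0]
  have hstar_pos : 0 < vecStar x := by
    unfold vecStar; rw [hsupeq]; exact lt_min (hxpos m) h1m
  have hyj1 : y j ≤ 1 := by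
    have h := Finset.single_le_sum (f := y) (fun i _ => (hypos i).le) (Finset.mem_univ j)
    rw [hysum] at h
    exact h
  have hxjm : x j ≤ 1 - x m := by
    by_cases hjm : j = m
    · subst hjm; nlinarith
    · linarith [hpair j m hjm]
  have hxstar : x j ≤ vecStar x := by
    unfold vecStar; rw [hsupeq]; exact le_min (hm j) hxjm
  -- key inequality
  have hnegα : -α ≤ 0 := by linarith
  have s1 : (vecStar x) ^ (-α) ≤ x j ^ (-α) :=
    Real.rpow_le_rpow_of_nonpos hxj hxstar hnegα
  have s2 : x j ^ (-α) * x j ^ (α-1) = 1 / x j := by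
    rw [← Real.rpow_add hxj]
    have hee : -α + (α - 1) = -1 := by ring
    rw [hee, Real.rpow_neg_one, one_div]
  have hpj : 0 < x j ^ (α-1) := Real.rpow_pos_of_pos hxj _
  have h12 : 1/d ≤ 1/2 := by
    rw [div_le_div_iff₀ hd0 (by norm_num : (0:ℝ) < 2)]; linarith
  have hdineq : (0:ℝ) < 1 - 1/d := by linarith
  have key1 : (β' - β) * x j ^ (α-1) ≤ (1 - 1/d) * γ * (1 / x j) := by
    calc (β' - β) * x j ^ (α-1)
        ≤ ((1 - 1/d) * γ * (vecStar x) ^ (-α)) * x j ^ (α-1) :=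
          mul_le_mul_of_nonneg_right hgap hpj.le
      _ ≤ ((1 - 1/d) * γ * x j ^ (-α)) * x j ^ (α-1) :=
          mul_le_mul_of_nonneg_right
            (mul_le_mul_of_nonneg_left s1 (by positivity)) hpj.le
      _ = (1 - 1/d) * γ * (x j ^ (-α) * x j ^ (α-1)) := by ring
      _ = (1 - 1/d) * γ * (1 / x j) := by rw [s2]
  -- LHS > 0
  have u1 : y j ^ (α-1) < x j ^ (α-1) := Real.rpow_lt_rpow_of_neg hxj hxyj hαm
  have hdxj : 0 < d * x j := by positivity
  have u2 : γ / y j < γ / (d * x j) := div_lt_div_of_pos_left hγ hdxj hcon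
  have u3 : γ / (d * x j) = 1/d * (γ / x j) := by
    field_simp
  have key1' : (β' - β) * x j ^ (α-1) ≤ γ / x j - 1/d * (γ / x j) := by
    calc (β' - β) * x j ^ (α-1) ≤ (1 - 1/d) * γ * (1 / x j) := key1
      _ = γ / x j - 1/d * (γ / x j) := by ring
  have hLHS : 0 < β * x j ^ (α-1) + γ / x j - (β' * y j ^ (α-1) + γ / y j) := by
    have b1 : β' * y j ^ (α-1) < β' * x j ^ (α-1) :=
      mul_lt_mul_of_pos_left u1 (lt_of_lt_of_le hβ hββ')
    have b2 : β' * x j ^ (α-1) = β * x j ^ (α-1) + (β' - β) * x j ^ (α-1) := by ring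
    have u2' : γ / y j < 1/d * (γ / x j) := by
      calc γ / y j < γ / (d * x j) := u2
        _ = 1/d * (γ / x j) := u3
    linarith
  linarith
end

section
/- Let K ≥ 2, α ∈ (0,1), γ ≥ 6, L ∈ ℝ^K, h ∈ [−1,1], and let x'_1 > 0 be a real number. Fix ω ∈ (1,2] and suppose β ≥ 4K/((ω−1)(1−ω^{α−1})). Suppose x minimizes F_{L,β,γ} and y minimizes F_{L+(h/x'_1)e_1, β, γ}. If 4·x'_1 ≥ x_1, then y_i ≤ 3·x_i for all i ∈ [K]. -/
open Finset

lemma kkt {K : ℕ} {α β γ : ℝ} (hα0 : α ≠ 0) {L x : Fin K → ℝ}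
    (hx : MinimizesF α β γ L x) {i j : Fin K} (hij : i ≠ j) :
    L i - β * x i ^ (α - 1) - γ / x i = L j - β * x j ^ (α - 1) - γ / x j := by
  obtain ⟨⟨hpos, hsum⟩, hmin⟩ := hx
  set d : Fin K → ℝ := fun k => (if k = i then 1 else 0) - (if k = j then 1 else 0) with hd
  set p : ℝ → Fin K → ℝ := fun t k => x k + t * d k with hp
  have hdsum : ∑ k, d k = 0 := by
    simp [hd, Finset.sum_sub_distrib]
  have hp0 : p 0 = x := by funext k; simp [hp]
  -- membership
  have hmem : ∀ t ∈ Set.Ioo (-(x i)) (x j), posSimplex (p t) := by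
    rintro t ⟨ht1, ht2⟩
    constructor
    · intro k
      by_cases hki : k = i
      · subst hki; simp [hp, hd, hij]; linarith
      · by_cases hkj : k = j
        · subst hkj; simp [hp, hd, Ne.symm hij, hki]; linarith
        · simpa [hp, hd, hki, hkj] using hpos k
    · simp [hp, Finset.sum_add_distrib, hsum, ← Finset.mul_sum, hdsum]
  -- local min
  have hloc : IsLocalMin (fun t => hybridF α β γ L (p t)) 0 := by
    have hnb : Set.Ioo (-(x i)) (x j) ∈ nhds (0:ℝ) :=
      Ioo_mem_nhds (by linarith [hpos i]) (hpos j)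
    refine Filter.eventually_of_mem hnb fun t ht => ?_
    have := hmin (p t) (hmem t ht)
    simpa [hp0] using this
  -- derivative
  have hder : ∀ k : Fin K, HasDerivAt (fun t => p t k) (d k) 0 := by
    intro k
    simpa [hp] using (((hasDerivAt_id (0:ℝ)).mul_const (d k)).const_add (x k))
  have hA : HasDerivAt (fun t => ∑ k, L k * p t k) (∑ k : Fin K, L k * d k) 0 :=
    HasDerivAt.fun_sum fun k _ => (hder k).const_mul (L k)
  have hB : HasDerivAt (fun t => ∑ k, (p t k) ^ α)
      (∑ k : Fin K, α * x k ^ (α - 1) * d k) 0 := by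
    refine HasDerivAt.fun_sum fun k _ => ?_
    have := (hder k).rpow_const (p := α) (Or.inl ?_)
    · have h2 : HasDerivAt (fun t => p t k ^ α) (d k * α * x k ^ (α - 1)) 0 := by
        simpa [hp0] using this
      exact h2.congr_deriv (by ring)
    · simp [hp0]; exact (hpos k).ne'
  have hC : HasDerivAt (fun t => ∑ k, Real.log (p t k)) (∑ k : Fin K, d k / x k) 0 := by
    refine HasDerivAt.fun_sum fun k _ => ?_
    have := ((hder k).log ?_)
    · simpa [hp0] using this
    · simp [hp0]; exact (hpos k).ne'
  have hF : HasDerivAt (fun t => hybridF α β γ L (p t))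
      ((∑ k : Fin K, L k * d k) + (β / α) * (-(∑ k : Fin K, α * x k ^ (α - 1) * d k))
        - γ * (∑ k : Fin K, d k / x k)) 0 := by
    have := (hA.fun_add ((hB.const_sub 1).const_mul (β / α))).fun_sub (hC.const_mul γ)
    simpa [hybridF, mul_neg] using this
  have hzero := hloc.hasDerivAt_eq_zero hF
  have e1 : ∑ k : Fin K, L k * d k = L i - L j := by
    simp [hd, mul_sub, mul_ite, Finset.sum_sub_distrib]
  have e2 : ∑ k : Fin K, α * x k ^ (α - 1) * d k
      = α * x i ^ (α - 1) - α * x j ^ (α - 1) := by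
    simp [hd, mul_sub, mul_ite, Finset.sum_sub_distrib]
  have e3 : ∑ k : Fin K, d k / x k = 1 / x i - 1 / x j := by
    simp [hd, sub_div, ite_div, Finset.sum_sub_distrib]
  rw [e1, e2, e3] at hzero
  have hβα : (β / α) * (α * x i ^ (α - 1)) = β * x i ^ (α - 1) := by
    field_simp
  have hβα' : (β / α) * (α * x j ^ (α - 1)) = β * x j ^ (α - 1) := by
    field_simp
  have hgi : γ / x i = γ * (1 / x i) := by ring
  have hgj : γ / x j = γ * (1 / x j) := by ring
  rw [hgi, hgj]
  nlinarith [hzero, hβα, hβα']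

lemma phiaux_lt {α β γ : ℝ} (hβ : 0 ≤ β) (hγ : 0 < γ) (hα1 : α < 1) {s t : ℝ}
    (hs : 0 < s) (hst : s < t) :
    β * t ^ (α - 1) + γ / t < β * s ^ (α - 1) + γ / s := by
  have h1 : t ^ (α - 1) ≤ s ^ (α - 1) :=
    Real.rpow_le_rpow_of_nonpos hs hst.le (by linarith)
  have h2 : γ / t < γ / s := div_lt_div_of_pos_left hγ hs hst
  nlinarith [mul_le_mul_of_nonneg_left h1 hβ]

lemma phiaux_le {α β γ : ℝ} (hβ : 0 ≤ β) (hγ : 0 < γ) (hα1 : α < 1) {s t : ℝ}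
    (hs : 0 < s) (hst : s ≤ t) :
    β * t ^ (α - 1) + γ / t ≤ β * s ^ (α - 1) + γ / s := by
  rcases eq_or_lt_of_le hst with rfl | h
  · exact le_refl _
  · exact (phiaux_lt hβ hγ hα1 hs h).le

set_option maxHeartbeats 1000000 in
/-- **Stability for large learning rates (Lemma 9).**
Fix `ω ∈ (1,2]` and suppose `β ≥ 4K/((ω−1)(1−ω^{α−1}))`, `γ ≥ 6`, `h ∈ [−1,1]`,
`x'₁ > 0`.  If `x` minimizes `F_{L,β,γ}`, `y` minimizes `F_{L+(h/x'₁)e₁,β,γ}`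
and `4x'₁ ≥ x₁`, then `yᵢ ≤ 3xᵢ` for all `i`. -/
theorem stmt3 {K : ℕ} (hK : 2 ≤ K) {α β γ h x1' ω : ℝ}
    (hα : α ∈ Set.Ioo (0:ℝ) 1) (hγ : 6 ≤ γ)
    (hh : h ∈ Set.Icc (-1:ℝ) 1) (hx1' : 0 < x1')
    (hω : ω ∈ Set.Ioc (1:ℝ) 2)
    (hβ : 4 * K / ((ω - 1) * (1 - ω ^ (α - 1))) ≤ β)
    (L x y : Fin K → ℝ)
    (hx : MinimizesF α β γ L x)
    (hy : MinimizesF α β γ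
      (fun i => L i + (h / x1') * (if (i : ℕ) = 0 then 1 else 0)) y)
    (h4 : 4 * x1' ≥ x ⟨0, by omega⟩) :
    ∀ i, y i ≤ 3 * x i := by
  obtain ⟨hα0, hα1⟩ := hα
  obtain ⟨hω1, hω2⟩ := hω
  obtain ⟨hh1, hh2⟩ := hh
  obtain ⟨⟨hxpos, hxsum⟩, -⟩ := id hx
  obtain ⟨⟨hypos, hysum⟩, -⟩ := id hy
  have hγ0 : (0:ℝ) < γ := by linarith
  set i0 : Fin K := ⟨0, by omega⟩ with hi0def
  set i1 : Fin K := ⟨1, by omega⟩ with hi1def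
  have hi01 : i1 ≠ i0 := by simp [hi0def, hi1def, Fin.ext_iff]
  have hωα : ω ^ (α - 1) < 1 := Real.rpow_lt_one_of_one_lt_of_neg hω1 (by linarith)
  have hu : 0 < 1 - ω ^ (α - 1) := by linarith
  have hv : 0 < ω - 1 := by linarith
  have hK2 : (2:ℝ) ≤ (K:ℝ) := by exact_mod_cast hK
  have hK0 : (0:ℝ) < (K:ℝ) := by linarith
  have hβ0 : 0 < β := by
    have h1 : 0 < 4 * (K:ℝ) / ((ω - 1) * (1 - ω ^ (α - 1))) := by positivity
    linarith
  have hβ' : 4 * (K:ℝ) / (ω - 1) ≤ β * (1 - ω ^ (α - 1)) := by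
    rw [div_le_iff₀ (mul_pos hv hu)] at hβ
    rw [div_le_iff₀ hv]
    nlinarith
  have hxle1 : ∀ i, x i ≤ 1 := by
    intro i
    have := Finset.single_le_sum (f := x) (fun j _ => (hxpos j).le) (mem_univ i)
    rw [hxsum] at this; exact this
  have hx0 : 0 < x i0 := hxpos i0
  have hy0 : 0 < y i0 := hypos i0
  -- epsilon bounds
  have hε1 : h / x1' ≤ 1 / x1' := (div_le_div_iff_of_pos_right hx1').2 hh2
  have hε2 : -(1 / x1') ≤ h / x1' := by
    have := (div_le_div_iff_of_pos_right hx1').2 hh1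
    rw [neg_div] at this; linarith
  have h14 : 1 / x1' ≤ 4 / x i0 := by
    rw [div_le_div_iff₀ hx1' hx0]
    have : x i0 = x ⟨0, by omega⟩ := rfl
    linarith [h4]
  -- the constant c
  obtain ⟨ε, hεdef⟩ : ∃ e : ℝ, e = h / x1' := ⟨_, rfl⟩
  rw [← hεdef] at hε1 hε2
  simp only [← hεdef] at hy
  obtain ⟨c, hcdef⟩ : ∃ cc : ℝ,
      cc = (β * x i0 ^ (α - 1) + γ / x i0) - (β * y i0 ^ (α - 1) + γ / y i0) + ε :=
    ⟨_, rfl⟩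
  have key : ∀ i, i ≠ i0 →
      (β * x i ^ (α - 1) + γ / x i) - (β * y i ^ (α - 1) + γ / y i) = c := by
    intro i hi
    have hi' : (i : ℕ) ≠ 0 := fun hc => hi (Fin.ext hc)
    have e1 := kkt (ne_of_gt hα0) hx (i := i) (j := i0) hi
    have e2 := kkt (ne_of_gt hα0) hy (i := i) (j := i0) hi
    simp only [hi', if_neg, if_pos, hi0def] at e2
    rw [hcdef]
    simp only [hi0def] at e1 ⊢
    norm_num at e2
    linarith
  -- positivity facts for phi arguments
  rcases le_or_gt c 0 with hc | hc
  · -- Case A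
    intro i
    by_cases hi : i = i0
    · rw [hi]
      by_contra h3
      push_neg at h3
      have h3x : 0 < 3 * x i0 := by linarith
      have hlt : β * y i0 ^ (α - 1) + γ / y i0
          < β * (3 * x i0) ^ (α - 1) + γ / (3 * x i0) :=
        phiaux_lt hβ0.le hγ0 hα1 h3x h3
      have hrp : (3 * x i0) ^ (α - 1) ≤ x i0 ^ (α - 1) :=
        Real.rpow_le_rpow_of_nonpos hx0 (by linarith) (by linarith)
      have hdiv : γ / (3 * x i0) = (γ / 3) / x i0 := by
        rw [div_div]
      have hdiv2 : (γ / 3) / x i0 ≤ (γ - 4) / x i0 :=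
        (div_le_div_iff_of_pos_right hx0).2 (by linarith)
      -- phi(y0) >= phi(x0) - 4/x0
      have hkey : (β * x i0 ^ (α - 1) + γ / x i0) - (β * y i0 ^ (α - 1) + γ / y i0)
          = c - ε := by
        rw [hcdef]; ring
      have hbound : (β * x i0 ^ (α - 1) + γ / x i0) - (β * y i0 ^ (α - 1) + γ / y i0)
          ≤ 4 / x i0 := by
        rw [hkey]; have : -ε ≤ 1 / x1' := by linarith
        linarith
      have hsub : (γ - 4) / x i0 = γ / x i0 - 4 / x i0 := by rw [sub_div]
      nlinarith [mul_le_mul_of_nonneg_left hrp hβ0.le]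
    · have hk := key i hi
      have : y i ≤ x i := by
        by_contra hlt
        push_neg at hlt
        have := phiaux_lt hβ0.le hγ0 hα1 (hxpos i) hlt
        linarith
      linarith [hxpos i]
  · -- Case B
    have hxy : ∀ i, i ≠ i0 → x i < y i := by
      intro i hi
      by_contra hle
      push_neg at hle
      have := phiaux_le hβ0.le hγ0 hα1 (hypos i) hle
      linarith [key i hi]
    have hne : (univ.erase i0).Nonempty := ⟨i1, Finset.mem_erase.2 ⟨hi01, mem_univ i1⟩⟩
    have hy0x0 : y i0 < x i0 := by
      have hsx : x i0 + ∑ i ∈ univ.erase i0, x i = 1 := by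
        rw [Finset.add_sum_erase univ x (mem_univ i0)]; exact hxsum
      have hsy : y i0 + ∑ i ∈ univ.erase i0, y i = 1 := by
        rw [Finset.add_sum_erase univ y (mem_univ i0)]; exact hysum
      have : ∑ i ∈ univ.erase i0, x i < ∑ i ∈ univ.erase i0, y i :=
        Finset.sum_lt_sum_of_nonempty hne fun i hi => hxy i (Finset.ne_of_mem_erase hi)
      linarith
    have hcε : c < ε := by
      have := phiaux_lt hβ0.le hγ0 hα1 hy0 hy0x0
      rw [hcdef]; linarith
    have hc4 : c < 4 / x i0 := by linarith
    intro i
    by_cases hi : i = i0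
    · rw [hi]; linarith
    · by_contra h3
      push_neg at h3
      have hxi0 : 0 < x i := hxpos i
      have hωxi : ω * x i < y i := by
        have := mul_le_mul_of_nonneg_right hω2 (hxpos i).le
        linarith
      have hωx0 : 0 < ω * x i := by positivity
      -- c > psi(x i)
      have hlt1 : β * y i ^ (α - 1) + γ / y i < β * (ω * x i) ^ (α - 1) + γ / (ω * x i) :=
        phiaux_lt hβ0.le hγ0 hα1 hωx0 hωxi
      have hexp : ∀ z : ℝ, 0 < z → (ω * z) ^ (α - 1) = ω ^ (α - 1) * z ^ (α - 1) :=
        fun z hz => Real.mul_rpow (by linarith) hz.le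
      have hψi : (β * x i ^ (α - 1) + γ / x i) - (β * (ω * x i) ^ (α - 1) + γ / (ω * x i))
          = β * x i ^ (α - 1) * (1 - ω ^ (α - 1)) + (γ / x i) * (1 - 1 / ω) := by
        rw [hexp _ hxi0]
        field_simp
        ring
      have hci : c > β * x i ^ (α - 1) * (1 - ω ^ (α - 1)) + (γ / x i) * (1 - 1 / ω) := by
        have := key i hi
        linarith [hψi]
      -- c > 4K/(ω-1)
      have hxiα : 1 ≤ x i ^ (α - 1) := by
        have := Real.rpow_le_rpow_of_nonpos hxi0 (hxle1 i) (by linarith : α - 1 ≤ 0)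
        simpa using this
      have hωinv : 0 ≤ 1 - 1 / ω := by
        have : 1 / ω ≤ 1 := by rw [div_le_one (by linarith)]; linarith
        linarith
      have hcK : 4 * (K:ℝ) / (ω - 1) < c := by
        have t1 : β * (1 - ω ^ (α - 1)) ≤ β * x i ^ (α - 1) * (1 - ω ^ (α - 1)) := by
          have := mul_le_mul_of_nonneg_left hxiα (mul_nonneg hβ0.le hu.le)
          nlinarith [this]
        have t2 : 0 ≤ (γ / x i) * (1 - 1 / ω) := by positivity
        linarith
      have hx0small : (K:ℝ) * x i0 < ω - 1 := by
        have h1 : 4 * (K:ℝ) / (ω - 1) < 4 / x i0 := lt_trans hcK hc4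
        rw [div_lt_div_iff₀ hv hx0] at h1
        nlinarith
      -- max coordinate m
      obtain ⟨m, hm, hmax⟩ := Finset.exists_max_image (univ.erase i0) x hne
      have hmne : m ≠ i0 := Finset.ne_of_mem_erase hm
      have hxm0 : 0 < x m := hxpos m
      have hωxm0 : 0 < ω * x m := by positivity
      -- psi antitone: psi(x m) ≤ psi(x i) < c
      have hxim : x i ≤ x m := hmax i (Finset.mem_erase.2 ⟨hi, mem_univ i⟩)
      have hψm : (β * x m ^ (α - 1) + γ / x m) - (β * (ω * x m) ^ (α - 1) + γ / (ω * x m))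
          = β * x m ^ (α - 1) * (1 - ω ^ (α - 1)) + (γ / x m) * (1 - 1 / ω) := by
        rw [hexp _ hxm0]
        field_simp
        ring
      have hanti : β * x m ^ (α - 1) * (1 - ω ^ (α - 1)) + (γ / x m) * (1 - 1 / ω)
          ≤ β * x i ^ (α - 1) * (1 - ω ^ (α - 1)) + (γ / x i) * (1 - 1 / ω) := by
        have a1 : x m ^ (α - 1) ≤ x i ^ (α - 1) :=
          Real.rpow_le_rpow_of_nonpos hxi0 hxim (by linarith)
        have a2 : γ / x m ≤ γ / x i := div_le_div_of_nonneg_left hγ0.le hxi0 hxim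
        have b1 := mul_le_mul_of_nonneg_right
          (mul_le_mul_of_nonneg_left a1 hβ0.le) hu.le
        have b2 := mul_le_mul_of_nonneg_right a2 hωinv
        linarith [b1, b2]
      -- y m > ω x m
      have hym : ω * x m < y m := by
        by_contra hle
        push_neg at hle
        have := phiaux_le hβ0.le hγ0 hα1 (hypos m) hle
        have hkm := key m hmne
        linarith [hψm]
      -- sum bound
      have hsum_eq : ∑ j ∈ univ.erase i0, (y j - x j) = x i0 - y i0 := by
        rw [Finset.sum_sub_distrib]
        have hsx : x i0 + ∑ j ∈ univ.erase i0, x j = 1 := by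
          rw [Finset.add_sum_erase univ x (mem_univ i0)]; exact hxsum
        have hsy : y i0 + ∑ j ∈ univ.erase i0, y j = 1 := by
          rw [Finset.add_sum_erase univ y (mem_univ i0)]; exact hysum
        linarith
      have hsingle : y m - x m ≤ x i0 - y i0 := by
        rw [← hsum_eq]
        exact Finset.single_le_sum
          (fun j hj => (sub_pos.2 (hxy j (Finset.ne_of_mem_erase hj))).le) hm
      have hx0big : (ω - 1) * x m < x i0 := by nlinarith
      -- x m ≥ (1 - x i0)/(K-1)
      have hcard : (univ.erase i0).card = K - 1 := by
        rw [Finset.card_erase_of_mem (mem_univ i0), Finset.card_univ, Fintype.card_fin]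
      have hsumle : ∑ j ∈ univ.erase i0, x j ≤ ((K:ℝ) - 1) * x m := by
        have := Finset.sum_le_card_nsmul (univ.erase i0) x (x m)
          (fun j hj => hmax j hj)
        rw [hcard, nsmul_eq_mul] at this
        have hcast : ((K - 1 : ℕ) : ℝ) = (K:ℝ) - 1 := by
          have : (1:ℕ) ≤ K := by omega
          push_cast [Nat.cast_sub this]; ring
        rw [hcast] at this
        exact this
      have hxm_lb : 1 - x i0 ≤ ((K:ℝ) - 1) * x m := by
        have hsx : x i0 + ∑ j ∈ univ.erase i0, x j = 1 := by
          rw [Finset.add_sum_erase univ x (mem_univ i0)]; exact hxsum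
        linarith
      -- final contradiction
      have hK1 : (0:ℝ) < (K:ℝ) - 1 := by linarith
      have hA1 : ((K:ℝ) - 1) * ((ω - 1) * x m) < ((K:ℝ) - 1) * x i0 :=
        mul_lt_mul_of_pos_left hx0big hK1
      have hA2 : (ω - 1) * (1 - x i0) ≤ (ω - 1) * (((K:ℝ) - 1) * x m) :=
        mul_le_mul_of_nonneg_left hxm_lb hv.le
      have hA3 : ((K:ℝ) - 1) * ((ω - 1) * x m) = (ω - 1) * (((K:ℝ) - 1) * x m) := by
        ring
      have hfin : (ω - 1) * (1 - x i0) < ((K:ℝ) - 1) * x i0 := by linarith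
      have hint : 0 ≤ x i0 * (2 - ω) := mul_nonneg hx0.le (by linarith)
      linarith [hfin, hx0small, hint]
end

section
/- Let a, b ∈ [0,1] with a + b = 1, and let x ∈ [0,1]. Then (max(a,b))^x + (min(a,b))^x · 2^{x−1} ≥ 1. -/
/-!
Write `M = max a b` and `m = min a b`, so `m + M = 1` and `2 m ≤ 1`. For `t ∈ [0,1]` and `x ≤ 1`
we have `t ≤ t ^ x`; applied to `M` and to `2 m`, and using `m ^ x * 2 ^ (x - 1) = (2 m) ^ x / 2`,
this bounds the left-hand side below by `M + m = 1`.
-/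

namespace Real

lemma le_rpow_mul_two_rpow_sub_one {m x : ℝ} (hm : 0 ≤ m) (h2m : 2 * m ≤ 1) (hx : x ≤ 1) :
    m ≤ m ^ x * 2 ^ (x - 1) := by
  have key : 2 * m ≤ (2 * m) ^ x := self_le_rpow_of_le_one (by positivity) h2m hx
  calc m = 2 * m / 2 := by ring
    _ ≤ (2 * m) ^ x / 2 := by gcongr
    _ = m ^ x * 2 ^ (x - 1) := by
      rw [mul_rpow zero_le_two hm, rpow_sub_one two_ne_zero]
      ring

lemma one_le_rpow_add_rpow_mul_two_rpow_sub_one {m M x : ℝ} (hm : 0 ≤ m) (hmM : m ≤ M)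
    (hsum : m + M = 1) (hx : x ≤ 1) :
    1 ≤ M ^ x + m ^ x * 2 ^ (x - 1) := by
  have hM : M ≤ M ^ x := self_le_rpow_of_le_one (by linarith) (by linarith) hx
  have hm' : m ≤ m ^ x * 2 ^ (x - 1) := le_rpow_mul_two_rpow_sub_one hm (by linarith) hx
  linarith

end Real

/-- **Lemma 13.** For `a, b ∈ [0,1]` with `a + b = 1` and `x ∈ [0,1]`,
`(max(a,b))^x + (min(a,b))^x · 2^{x−1} ≥ 1`. -/
theorem stmt5 (a b x : ℝ) (ha : a ∈ Set.Icc (0:ℝ) 1) (hb : b ∈ Set.Icc (0:ℝ) 1)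
    (hab : a + b = 1) (hx : x ∈ Set.Icc (0:ℝ) 1) :
    1 ≤ (max a b) ^ x + (min a b) ^ x * (2:ℝ) ^ (x - 1) :=
  Real.one_le_rpow_add_rpow_mul_two_rpow_sub_one (le_min ha.1 hb.1) min_le_max
    (by rw [min_add_max, hab]) hx.2
end

section
/- Let K ≥ 2, α ∈ (0,1) and q ∈ Δ_K. Then (1/α)(Σ_{i=1}^K q_i^α − 1) ≥ (1 − 2^{α−1})·q_*^α/α, and consequently (1/α)(Σ_{i=1}^K q_i^α − 1) ≥ ((1−α)/(4α))·q_*^α. -/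
/-!
Let `M` be the largest coordinate of `q` and `m = min M (1 - M) ≤ 1/2`. Subadditivity of
`t ↦ t ^ α` bounds `∑ qᵢ ^ α` below by `M ^ α + (1 - M) ^ α = m ^ α + (1 - m) ^ α`.
Since `1 - m ≤ (1 - m) ^ α` and `m = m ^ (1 - α) m ^ α ≤ 2 ^ (α - 1) m ^ α`, this exceeds
`1 + (1 - 2 ^ (α - 1)) m ^ α`. Bernoulli's inequality `2 ^ α ≤ 1 + α` finally gives
`(1 - α) / 4 ≤ 1 - 2 ^ (α - 1)`.
-/

open Finset

theorem Real.rpow_sum_le_sum_rpow {ι : Type*} (s : Finset ι) {f : ι → ℝ}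
    (hf : ∀ i ∈ s, 0 ≤ f i) {p : ℝ} (hp0 : 0 < p) (hp1 : p ≤ 1) :
    (∑ i ∈ s, f i) ^ p ≤ ∑ i ∈ s, f i ^ p :=
  le_sum_of_subadditive_on_pred (· ^ p) (0 ≤ ·) (by simp [Real.zero_rpow hp0.ne'])
    (fun _ _ hx hy => Real.rpow_add_le_add_rpow hx hy hp0.le hp1) (fun _ _ => add_nonneg) f hf

theorem rpow_add_rpow_one_sub_le_sum_rpow {ι : Type*} [Fintype ι] [DecidableEq ι]
    {q : ι → ℝ} (hq0 : ∀ i, 0 ≤ q i) (hq1 : ∑ i, q i = 1) (j : ι) {α : ℝ} (hα0 : 0 < α)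
    (hα1 : α ≤ 1) :
    q j ^ α + (1 - q j) ^ α ≤ ∑ i, q i ^ α := by
  have hrest : ∑ i ∈ univ.erase j, q i = 1 - q j := by
    rw [sum_erase_eq_sub (mem_univ j), hq1]
  rw [← add_sum_erase _ _ (mem_univ j), ← hrest]
  gcongr
  exact Real.rpow_sum_le_sum_rpow _ (fun i _ => hq0 i) hα0 hα1

theorem le_two_rpow_sub_one_mul_rpow {m α : ℝ} (hm0 : 0 ≤ m) (hm : m ≤ 1 / 2) (hα : α ≤ 1) :
    m ≤ 2 ^ (α - 1) * m ^ α := by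
  rcases hm0.eq_or_lt with rfl | hpos
  · positivity
  have hpow : m ^ (1 - α) ≤ 2 ^ (α - 1) := by
    calc m ^ (1 - α) ≤ (1 / 2) ^ (1 - α) := by gcongr
      _ = 2 ^ (α - 1) := by
        rw [one_div, Real.inv_rpow zero_le_two, ← Real.rpow_neg zero_le_two, neg_sub]
  calc m = m ^ (1 - α) * m ^ α := by rw [← Real.rpow_add hpos, sub_add_cancel, Real.rpow_one]
    _ ≤ 2 ^ (α - 1) * m ^ α := by gcongr

theorem one_sub_two_rpow_mul_le_of_le_half {m α : ℝ} (hm0 : 0 ≤ m) (hm : m ≤ 1 / 2)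
    (hα1 : α ≤ 1) :
    (1 - 2 ^ (α - 1)) * m ^ α ≤ m ^ α + (1 - m) ^ α - 1 := by
  have h1 := le_two_rpow_sub_one_mul_rpow hm0 hm hα1
  have h2 : 1 - m ≤ (1 - m) ^ α := Real.self_le_rpow_of_le_one (by linarith) (by linarith) hα1
  linarith

theorem one_sub_two_rpow_mul_min_le {t α : ℝ} (ht0 : 0 ≤ t) (ht1 : t ≤ 1) (hα1 : α ≤ 1) :
    (1 - 2 ^ (α - 1)) * min t (1 - t) ^ α ≤ t ^ α + (1 - t) ^ α - 1 := by
  rcases le_total t (1 - t) with h | h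
  · rw [min_eq_left h]
    exact one_sub_two_rpow_mul_le_of_le_half ht0 (by linarith) hα1
  · rw [min_eq_right h]
    have := one_sub_two_rpow_mul_le_of_le_half (m := 1 - t) (by linarith) (by linarith) hα1
    rwa [sub_sub_cancel, add_comm ((1 - t) ^ α)] at this

theorem one_sub_div_four_le_one_sub_two_rpow {α : ℝ} (hα0 : 0 ≤ α) (hα1 : α ≤ 1) :
    (1 - α) / 4 ≤ 1 - 2 ^ (α - 1) := by
  have hbern : (2 : ℝ) ^ α ≤ 1 + α := by
    simpa [one_add_one_eq_two, mul_one] using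
      rpow_one_add_le_one_add_mul_self (by norm_num : (-1 : ℝ) ≤ 1) hα0 hα1
  have h2 : (2 : ℝ) ^ α = 2 * 2 ^ (α - 1) := by
    rw [Real.rpow_sub two_pos, Real.rpow_one]; ring
  linarith

theorem vecStar_eq_of_forall_le {K : ℕ} {x : Fin K → ℝ} {j : Fin K} (hj : ∀ i, x i ≤ x j) :
    vecStar x = min (x j) (1 - x j) := by
  have : Nonempty (Fin K) := ⟨j⟩
  have : (⨆ i, x i) = x j :=
    le_antisymm (ciSup_le hj) (le_ciSup (Set.finite_range x).bddAbove j)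
  rw [vecStar, this]

theorem stmt6_general {K : ℕ} (α : ℝ) (hα : α ∈ Set.Ioo (0:ℝ) 1)
    (q : Fin K → ℝ) (hq : (∀ i, 0 ≤ q i) ∧ ∑ i, q i = 1) :
    (1 - (2:ℝ) ^ (α - 1)) * (vecStar q) ^ α / α ≤ (1 / α) * ((∑ i, q i ^ α) - 1) ∧
    ((1 - α) / (4 * α)) * (vecStar q) ^ α ≤ (1 / α) * ((∑ i, q i ^ α) - 1) := by
  obtain ⟨hq0, hq1⟩ := hq
  obtain ⟨hα0, hα1⟩ := hα
  have : Nonempty (Fin K) :=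
    univ_nonempty_iff.mp (nonempty_of_sum_ne_zero (hq1 ▸ one_ne_zero))
  obtain ⟨j, hj⟩ := Finite.exists_max q
  have hj1 : q j ≤ 1 := hq1 ▸ single_le_sum (fun i _ => hq0 i) (mem_univ j)
  rw [vecStar_eq_of_forall_le hj]
  set m := min (q j) (1 - q j)
  have hmα : 0 ≤ m ^ α := Real.rpow_nonneg (le_min (hq0 j) (by linarith)) α
  have hbound : (1 - (2:ℝ) ^ (α - 1)) * m ^ α ≤ (∑ i, q i ^ α) - 1 := by
    linarith [one_sub_two_rpow_mul_min_le (hq0 j) hj1 hα1.le,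
      rpow_add_rpow_one_sub_le_sum_rpow hq0 hq1 j hα0 hα1.le]
  have hfirst : (1 - (2:ℝ) ^ (α - 1)) * m ^ α / α ≤ 1 / α * ((∑ i, q i ^ α) - 1) := by
    rw [div_eq_mul_one_div, mul_comm]
    exact mul_le_mul_of_nonneg_left hbound (by positivity)
  refine ⟨hfirst, le_trans ?_ hfirst⟩
  calc (1 - α) / (4 * α) * m ^ α = (1 - α) / 4 * m ^ α / α := by field_simp
    _ ≤ (1 - 2 ^ (α - 1)) * m ^ α / α := by
      gcongr
      exact one_sub_div_four_le_one_sub_two_rpow hα0.le hα1.le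

/-- **Lemma 14.** For `q ∈ Δ_K`, the negative α-Tsallis entropy satisfies
`(1/α)(Σᵢ qᵢ^α − 1) ≥ (1 − 2^{α−1})·q_*^α/α`, and consequently
`(1/α)(Σᵢ qᵢ^α − 1) ≥ ((1−α)/(4α))·q_*^α`. -/
theorem stmt6 {K : ℕ} (hK : 2 ≤ K) (α : ℝ) (hα : α ∈ Set.Ioo (0:ℝ) 1)
    (q : Fin K → ℝ) (hq : (∀ i, 0 ≤ q i) ∧ ∑ i, q i = 1) :
    (1 - (2:ℝ) ^ (α - 1)) * (vecStar q) ^ α / α ≤ (1 / α) * ((∑ i, q i ^ α) - 1) ∧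
    ((1 - α) / (4 * α)) * (vecStar q) ^ α ≤ (1 / α) * ((∑ i, q i ^ α) - 1) :=
  stmt6_general α hα q hq
end

section
/- Let α ∈ (0,1), let S ≥ 1 be an integer, let p ∈ Δ_K have all coordinates strictly positive, and let ℓ ∈ ℝ^K satisfy |ℓ_i| ≤ 1 for all i and |{i ∈ [K] : ℓ_i ≠ 0}| ≤ S. Then Σ_{i=1}^K (min(p_i, 1 − p_i))^{2−α} · ℓ_i² / p_i ≤ S^α. -/
open Finset

/-- **Sparsity bound for the expected real-time stability term (core of Lemma 3).**
If `p ∈ Δ_K` has positive coordinates, `|ℓᵢ| ≤ 1` for all `i` and `ℓ` has at most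
`S ≥ 1` nonzero coordinates, then
`Σᵢ (min(pᵢ, 1−pᵢ))^{2−α} ℓᵢ² / pᵢ ≤ S^α`. -/
theorem stmt8 {K : ℕ} (α : ℝ) (hα : α ∈ Set.Ioo (0:ℝ) 1) (S : ℕ) (hS : 1 ≤ S)
    (p : Fin K → ℝ) (hp : (∀ i, 0 < p i) ∧ ∑ i, p i = 1)
    (ℓ : Fin K → ℝ) (hℓ : ∀ i, |ℓ i| ≤ 1)
    (hsparse : (Finset.univ.filter fun i => ℓ i ≠ 0).card ≤ S) :
    ∑ i, (min (p i) (1 - p i)) ^ (2 - α) * (ℓ i) ^ 2 / p i ≤ (S : ℝ) ^ α := by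
  obtain ⟨hpos, hsum⟩ := hp
  obtain ⟨hα0, hα1⟩ := hα
  set T := Finset.univ.filter fun i => ℓ i ≠ 0 with hT
  have hple : ∀ i, p i ≤ 1 := by
    intro i
    calc p i ≤ ∑ j, p j :=
          Finset.single_le_sum (fun j _ => (hpos j).le) (Finset.mem_univ i)
      _ = 1 := hsum
  have hmin : ∀ i, 0 ≤ min (p i) (1 - p i) := fun i =>
    le_min (hpos i).le (by linarith [hple i])
  -- termwise bound
  have key : ∀ i, (min (p i) (1 - p i)) ^ (2 - α) * (ℓ i) ^ 2 / p i ≤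
      (if ℓ i ≠ 0 then p i ^ (1 - α) else 0) := by
    intro i
    by_cases h : ℓ i = 0
    · simp [h]
    · simp only [h, ne_eq, not_false_iff, if_true]
      have h1 : (min (p i) (1 - p i)) ^ (2 - α) ≤ (p i) ^ (2 - α) :=
        Real.rpow_le_rpow (hmin i) (min_le_left _ _) (by linarith)
      have h2 : (ℓ i) ^ 2 ≤ 1 := by
        have := hℓ i
        nlinarith [abs_nonneg (ℓ i), sq_abs (ℓ i)]
      have h3 : (min (p i) (1 - p i)) ^ (2 - α) * (ℓ i) ^ 2 ≤ (p i) ^ (2 - α) := by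
        calc (min (p i) (1 - p i)) ^ (2 - α) * (ℓ i) ^ 2
            ≤ (p i) ^ (2 - α) * 1 := by
              apply mul_le_mul h1 h2 (sq_nonneg _) (Real.rpow_nonneg (hpos i).le _)
          _ = (p i) ^ (2 - α) := mul_one _
      have h4 : (p i) ^ (2 - α) / p i = p i ^ (1 - α) := by
        rw [show (2 : ℝ) - α = (1 - α) + 1 by ring, Real.rpow_add_one (hpos i).ne',
          mul_div_cancel_right₀ _ (hpos i).ne']
      calc (min (p i) (1 - p i)) ^ (2 - α) * (ℓ i) ^ 2 / p i
          ≤ (p i) ^ (2 - α) / p i := by gcongr; exact (hpos i).le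
        _ = p i ^ (1 - α) := h4
  have step1 : ∑ i, (min (p i) (1 - p i)) ^ (2 - α) * (ℓ i) ^ 2 / p i ≤
      ∑ i ∈ T, p i ^ (1 - α) := by
    calc ∑ i, (min (p i) (1 - p i)) ^ (2 - α) * (ℓ i) ^ 2 / p i
        ≤ ∑ i, (if ℓ i ≠ 0 then p i ^ (1 - α) else 0) :=
          Finset.sum_le_sum fun i _ => key i
      _ = ∑ i ∈ T, p i ^ (1 - α) := (Finset.sum_filter _ _).symm
  -- Hölder step
  have hconj : Real.HolderConjugate (1/α) (1/(1-α)) := by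
    rw [Real.holderConjugate_iff]; constructor
    · rw [lt_div_iff₀ hα0]; linarith
    · simp only [one_div, inv_inv]; ring
  have holder := Real.inner_le_Lp_mul_Lq_of_nonneg (s := T)
    (f := fun _ => (1:ℝ)) (g := fun i => p i ^ (1 - α)) hconj
    (fun i _ => zero_le_one) (fun i _ => Real.rpow_nonneg (hpos i).le _)
  simp only [one_mul] at holder
  have e1 : ∑ i ∈ T, (1:ℝ) ^ (1/α) = (T.card : ℝ) := by
    simp [Real.one_rpow]
  have e2 : ∀ i ∈ T, (p i ^ (1 - α)) ^ (1/(1-α)) = p i := by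
    intro i _
    rw [← Real.rpow_mul (hpos i).le, mul_one_div, div_self (by linarith : (1:ℝ)-α ≠ 0),
      Real.rpow_one]
  rw [e1, Finset.sum_congr rfl e2, one_div_one_div, one_div_one_div] at holder
  have hsumT : ∑ i ∈ T, p i ≤ 1 := by
    rw [← hsum]
    exact Finset.sum_le_sum_of_subset_of_nonneg (Finset.subset_univ _)
      (fun i _ _ => (hpos i).le)
  have hsumT0 : 0 ≤ ∑ i ∈ T, p i := Finset.sum_nonneg fun i _ => (hpos i).le
  have hcard : ((T.card : ℝ)) ^ α ≤ (S : ℝ) ^ α :=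
    Real.rpow_le_rpow (by positivity) (by exact_mod_cast hsparse) hα0.le
  have hrest : (∑ i ∈ T, p i) ^ (1 - α) ≤ 1 :=
    Real.rpow_le_one hsumT0 hsumT (by linarith)
  calc ∑ i, (min (p i) (1 - p i)) ^ (2 - α) * (ℓ i) ^ 2 / p i
      ≤ ∑ i ∈ T, p i ^ (1 - α) := step1
    _ ≤ (T.card : ℝ) ^ α * (∑ i ∈ T, p i) ^ (1 - α) := holder
    _ ≤ (S : ℝ) ^ α * 1 := by
        apply mul_le_mul hcard hrest (Real.rpow_nonneg hsumT0 _)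
          (Real.rpow_nonneg (by positivity) _)
    _ = (S : ℝ) ^ α := mul_one _
end

section
/- For every real p with 0 < p ≤ 1/4, one has −p·ln 2 + (1 − p)·ln((1 − p)/(1 − 2p)) ≤ p. -/
/-- **Lemma 18.** For `0 < p ≤ 1/4`,
`KL(Ber(p) ‖ Ber(2p)) = −p·ln 2 + (1−p)·ln((1−p)/(1−2p)) ≤ p`. -/
theorem stmt9 (p : ℝ) (hp : 0 < p) (hp' : p ≤ 1 / 4) :
    -p * Real.log 2 + (1 - p) * Real.log ((1 - p) / (1 - 2 * p)) ≤ p := by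
  have h2 : (0:ℝ) < 1 - 2 * p := by linarith
  have h1 : (0:ℝ) < 1 - p := by linarith
  have hq : 0 < (1 - p) / (1 - 2 * p) := div_pos h1 h2
  have hlog : Real.log ((1 - p) / (1 - 2 * p)) ≤ (1 - p) / (1 - 2 * p) - 1 :=
    Real.log_le_sub_one_of_pos hq
  have hL : (0.6931471803 : ℝ) < Real.log 2 := Real.log_two_gt_d9
  have hmul : (1 - p) * Real.log ((1 - p) / (1 - 2 * p)) ≤
      (1 - p) * ((1 - p) / (1 - 2 * p) - 1) :=
    mul_le_mul_of_nonneg_left hlog (le_of_lt h1)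
  have hdiv : (1 - p) / (1 - 2 * p) - 1 = p / (1 - 2 * p) := by
    rw [div_sub_one h2.ne']; ring
  rw [hdiv] at hmul
  have key : (1 - p) * (p / (1 - 2 * p)) ≤ p + p * Real.log 2 := by
    rw [mul_div_assoc', div_le_iff₀ h2]
    nlinarith [mul_pos hp (show (0:ℝ) < Real.log 2 - p - 2*p*Real.log 2 by nlinarith)]
  linarith
end

section
/- For every α ∈ [0,1] and every x ∈ [0,1), one has x^α ≥ (x − 1)·ln(1 − x). -/
/-- **Lemma 19.** For `α ∈ [0,1]` and `x ∈ [0,1)`, `x^α ≥ (x − 1)·ln(1 − x)`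
(real exponentiation, with `0^0 = 1`). -/
theorem stmt10 (α x : ℝ) (hα : α ∈ Set.Icc (0:ℝ) 1) (hx : x ∈ Set.Ico (0:ℝ) 1) :
    (x - 1) * Real.log (1 - x) ≤ x ^ α := by
  obtain ⟨hα0, hα1⟩ := hα
  obtain ⟨hx0, hx1⟩ := hx
  have ht : (0:ℝ) < 1 - x := by linarith
  rcases eq_or_lt_of_le hx0 with h0 | h0
  · simp [← h0, Real.log_one]
    positivity
  · have h1 : (x - 1) * Real.log (1 - x) ≤ x := by
      have := Real.log_le_sub_one_of_pos (x := 1/(1-x)) (by positivity)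
      rw [Real.log_div one_ne_zero (ne_of_gt ht), Real.log_one] at this
      have h2 : -Real.log (1-x) ≤ x / (1-x) := by
        have : 1/(1-x) - 1 = x/(1-x) := by field_simp; ring
        linarith [this]
      have h3 : -(1-x) * Real.log (1-x) ≤ x := by
        have := mul_le_mul_of_nonneg_left h2 (le_of_lt ht)
        rw [mul_div_cancel₀ _ (ne_of_gt ht)] at this
        nlinarith
      nlinarith
    have h2 : x ≤ x ^ α := by
      calc x = x ^ (1:ℝ) := (Real.rpow_one x).symm
      _ ≤ x ^ α := Real.rpow_le_rpow_of_exponent_ge h0 (le_of_lt hx1) hα1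
    linarith
end

section
/- Let f : (0,1) → ℝ be twice continuously differentiable with f''(t) > 0 for all t ∈ (0,1), let a ∈ ℝ, and let x, y ∈ (0,1). Then there exists z in the closed interval with endpoints x and y such that a·(x − y) − d_f(y, x) ≤ a²/(2·f''(z)). -/
/-- Second-order Taylor with Lagrange remainder, via double Rolle. -/
lemma taylor2_aux (f f' f'' : ℝ → ℝ)
    (hf : ∀ t ∈ Set.Ioo (0:ℝ) 1, HasDerivAt f (f' t) t)
    (hf' : ∀ t ∈ Set.Ioo (0:ℝ) 1, HasDerivAt f' (f'' t) t)
    (x y : ℝ) (hx : x ∈ Set.Ioo (0:ℝ) 1) (hy : y ∈ Set.Ioo (0:ℝ) 1)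
    (hxy : x ≠ y) :
    ∃ z ∈ Set.uIcc x y,
      f y - f x - f' x * (y - x) = f'' z / 2 * (y - x) ^ 2 := by
  have hsub : Set.uIcc x y ⊆ Set.Ioo (0:ℝ) 1 := by
    rw [Set.uIcc_eq_union]
    rintro t (ht | ht)
    · exact ⟨lt_of_lt_of_le hx.1 ht.1, lt_of_le_of_lt ht.2 hy.2⟩
    · exact ⟨lt_of_lt_of_le hy.1 ht.1, lt_of_le_of_lt ht.2 hx.2⟩
  set c : ℝ := (f y - f x - f' x * (y - x)) / (y - x) ^ 2 with hc
  have hyx : (y - x) ^ 2 ≠ 0 := by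
    have : y - x ≠ 0 := sub_ne_zero.mpr (Ne.symm hxy)
    positivity
  have hcy : f y - f x - f' x * (y - x) = c * (y - x) ^ 2 := by
    rw [hc, div_mul_cancel₀ _ hyx]
  set g : ℝ → ℝ := fun t => f t - f x - f' x * (t - x) - c * (t - x) ^ 2 with hg
  set g' : ℝ → ℝ := fun t => f' t - f' x - 2 * c * (t - x) with hg'
  have hgderiv : ∀ t ∈ Set.Ioo (0:ℝ) 1, HasDerivAt g (g' t) t := by
    intro t ht
    have A := (hf t ht).sub_const (f x)
    have B := ((hasDerivAt_id t).sub_const x).const_mul (f' x)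
    have C := (((hasDerivAt_id t).sub_const x).pow 2).const_mul c
    have D := (A.sub B).sub C
    simp only [id_eq] at D
    refine D.congr_deriv ?_
    push_cast
    simp [hg']
    ring
  have hg'deriv : ∀ t ∈ Set.Ioo (0:ℝ) 1, HasDerivAt g' (f'' t - 2 * c) t := by
    intro t ht
    have A := (hf' t ht).sub_const (f' x)
    have B := ((hasDerivAt_id t).sub_const x).const_mul (2 * c)
    have D := A.sub B
    simp only [id_eq] at D
    refine D.congr_deriv ?_
    ring
  have hgx : g x = 0 := by simp [hg]
  have hgy : g y = 0 := by simp [hg]; linarith [hcy]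
  have hpq : x ⊓ y < x ⊔ y := inf_lt_sup.mpr hxy
  have hIccsub : Set.Icc (x ⊓ y) (x ⊔ y) ⊆ Set.Ioo (0:ℝ) 1 := hsub
  have hgc : ContinuousOn g (Set.Icc (x ⊓ y) (x ⊔ y)) := fun t ht =>
    (hgderiv t (hIccsub ht)).continuousAt.continuousWithinAt
  have hgeq : g (x ⊓ y) = g (x ⊔ y) := by
    rcases le_total x y with h | h
    · rw [inf_eq_left.mpr h, sup_eq_right.mpr h, hgx, hgy]
    · rw [inf_eq_right.mpr h, sup_eq_left.mpr h, hgx, hgy]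
  obtain ⟨ξ, hξ, hξ0⟩ := exists_hasDerivAt_eq_zero hpq hgc hgeq
    (fun t ht => hgderiv t (hIccsub (Set.Ioo_subset_Icc_self ht)))
  have hξuIcc : ξ ∈ Set.uIcc x y := Set.Ioo_subset_Icc_self hξ
  have hxξ : x ≠ ξ := by
    intro h
    rcases le_total x y with hle | hle
    · rw [inf_eq_left.mpr hle, ← h] at hξ; exact lt_irrefl x hξ.1
    · rw [sup_eq_left.mpr hle, ← h] at hξ; exact lt_irrefl x hξ.2
  have hpq2 : x ⊓ ξ < x ⊔ ξ := inf_lt_sup.mpr hxξ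
  have hsub2 : Set.Icc (x ⊓ ξ) (x ⊔ ξ) ⊆ Set.Ioo (0:ℝ) 1 := fun t ht =>
    hsub (Set.uIcc_subset_uIcc Set.left_mem_uIcc hξuIcc ht)
  have hg'c : ContinuousOn g' (Set.Icc (x ⊓ ξ) (x ⊔ ξ)) := fun t ht =>
    (hg'deriv t (hsub2 ht)).continuousAt.continuousWithinAt
  have hg'x : g' x = 0 := by simp [hg']
  have hg'eq : g' (x ⊓ ξ) = g' (x ⊔ ξ) := by
    rcases le_total x ξ with h | h
    · rw [inf_eq_left.mpr h, sup_eq_right.mpr h, hg'x, hξ0]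
    · rw [inf_eq_right.mpr h, sup_eq_left.mpr h, hg'x, hξ0]
  obtain ⟨z, hz, hz0⟩ := exists_hasDerivAt_eq_zero hpq2 hg'c hg'eq
    (fun t ht => hg'deriv t (hsub2 (Set.Ioo_subset_Icc_self ht)))
  refine ⟨z, ?_, ?_⟩
  · exact Set.uIcc_subset_uIcc Set.left_mem_uIcc hξuIcc (Set.Ioo_subset_Icc_self hz)
  · have hfz : f'' z = 2 * c := by linarith
    rw [hcy, hfz]; ring

/-- **One-dimensional local-norm bound (Lemma 20).**
If `f` is twice continuously differentiable on `(0,1)` with `f'' > 0` there,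
`a ∈ ℝ` and `x, y ∈ (0,1)`, then there is `z` in the closed interval with
endpoints `x` and `y` such that
`a(x − y) − d_f(y,x) ≤ a²/(2 f''(z))`, where
`d_f(y,x) = f(y) − f(x) − f'(x)(y − x)`. -/
theorem stmt11 (f f' f'' : ℝ → ℝ)
    (hf : ∀ t ∈ Set.Ioo (0:ℝ) 1, HasDerivAt f (f' t) t)
    (hf' : ∀ t ∈ Set.Ioo (0:ℝ) 1, HasDerivAt f' (f'' t) t)
    (hf'' : ContinuousOn f'' (Set.Ioo (0:ℝ) 1))
    (hpos : ∀ t ∈ Set.Ioo (0:ℝ) 1, 0 < f'' t)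
    (a x y : ℝ) (hx : x ∈ Set.Ioo (0:ℝ) 1) (hy : y ∈ Set.Ioo (0:ℝ) 1) :
    ∃ z ∈ Set.uIcc x y,
      a * (x - y) - (f y - f x - f' x * (y - x)) ≤ a ^ 2 / (2 * f'' z) := by
  rcases eq_or_ne x y with rfl | hxy
  · refine ⟨x, Set.left_mem_uIcc, ?_⟩
    have h := hpos x hx
    have : (0:ℝ) ≤ a ^ 2 / (2 * f'' x) := by positivity
    simpa using this
  · obtain ⟨z, hz, heq⟩ := taylor2_aux f f' f'' hf hf' x y hx hy hxy
    refine ⟨z, hz, ?_⟩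
    have hsub : Set.uIcc x y ⊆ Set.Ioo (0:ℝ) 1 := by
      rw [Set.uIcc_eq_union]
      rintro t (ht | ht)
      · exact ⟨lt_of_lt_of_le hx.1 ht.1, lt_of_le_of_lt ht.2 hy.2⟩
      · exact ⟨lt_of_lt_of_le hy.1 ht.1, lt_of_le_of_lt ht.2 hx.2⟩
    have hzpos : 0 < f'' z := hpos z (hsub hz)
    rw [heq, le_div_iff₀ (by positivity : (0:ℝ) < 2 * f'' z)]
    nlinarith [sq_nonneg (a - f'' z * (x - y)), hzpos]
end

section
/- Let α ∈ (0,1), β > 4/(1−α), d ≥ 1, h ∈ [−1,1], q ∈ (0,1) and p ≥ q/2 with p > 0. Define f₁(u) = −u^α/α for u ≥ 0 and f₂(u) = (1−u)·ln(1−u) + u for u ∈ [0,1). Then for every u₁ ∈ [0, d·q] and every u₂ ∈ [0,1): min{ (h/p)·(q − u₁) − β·d_{f₁}(u₁, q), (h/p)·(q − u₂) − β·d_{f₂}(u₂, q) } ≤ (d^{2−α}·h²/(β·p²)) · min{ q^{2−α}/(2(1−α)), 1 − q }. -/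
open Real Set

lemma exp_quad {t : ℝ} (ht : |t| ≤ 1) : Real.exp t - 1 - t ≤ t^2 := by
  have h := Real.exp_bound ht (n := 2) (by norm_num)
  have h2 : |Real.exp t - (1 + t)| ≤ |t|^2 * (3/4) := by
    have : ∑ m ∈ Finset.range 2, t ^ m / m.factorial = 1 + t := by
      simp [Finset.sum_range_succ]
    rw [this] at h
    convert h using 2
    norm_num
  have h3 := (abs_le.mp h2).2
  have h4 : |t|^2 = t^2 := sq_abs t
  nlinarith

lemma breg2_point {t v r : ℝ} (hv : 0 < v) (hr : 0 < r) :
    t * (v - r) - (v * (Real.log v - Real.log r) + (r - v)) ≤ r * (Real.exp t - 1 - t) := by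
  set s := Real.log v - Real.log r with hs
  have h1 : 1 + (t - s) ≤ Real.exp (t - s) := by linarith [Real.add_one_le_exp (t - s)]
  have h2 : Real.exp (t - s) = Real.exp t * (r / v) := by
    rw [Real.exp_sub, hs, Real.exp_sub, Real.exp_log hv, Real.exp_log hr]
    field_simp
  rw [h2] at h1
  have h3 : v * (1 + (t - s)) ≤ v * (Real.exp t * (r / v)) :=
    mul_le_mul_of_nonneg_left h1 hv.le
  have h4 : v * (Real.exp t * (r / v)) = r * Real.exp t := by field_simp
  rw [h4] at h3
  nlinarith [h3]

lemma breg1_lower {α q M : ℝ} (hα0 : 0 < α) (hα1 : α < 1) (hq : 0 < q) (hqM : q ≤ M) :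
    ∀ u ∈ Set.Icc (0:ℝ) M,
      (1 - α) * M ^ (α - 2) * (u - q) ^ 2 / 2 ≤ q ^ α / α - u ^ α / α + q ^ (α - 1) * (u - q) := by
  have hM : 0 < M := lt_of_lt_of_le hq hqM
  set m : ℝ := (1 - α) * M ^ (α - 2) with hm
  set g : ℝ → ℝ := fun x => q ^ α / α - x ^ α / α + q ^ (α - 1) * (x - q) - m * (x - q) ^ 2 / 2
    with hg
  set g' : ℝ → ℝ := fun x => q ^ (α - 1) - x ^ (α - 1) - m * (x - q) with hg'
  -- derivative of g
  have hderiv : ∀ x : ℝ, x ≠ 0 → HasDerivAt g (g' x) x := by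
    intro x hx
    have h1 : HasDerivAt (fun x : ℝ => x ^ α) (α * x ^ (α - 1)) x :=
      Real.hasDerivAt_rpow_const (Or.inl hx)
    have h2 : HasDerivAt (fun x : ℝ => x - q) 1 x := (hasDerivAt_id x).sub_const q
    have h3 : HasDerivAt (fun x : ℝ => (x - q) ^ 2) (2 * (x - q) ^ 1 * 1) x := h2.pow 2
    have h4 := (((h1.div_const α).const_sub (q ^ α / α)).add
      (h2.const_mul (q ^ (α - 1)))).sub ((h3.const_mul m).div_const 2)
    refine h4.congr_deriv ?_
    simp only [hg']
    field_simp
    ring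
  -- derivative of g'
  have hderiv' : ∀ x : ℝ, x ≠ 0 → HasDerivAt g' ((1 - α) * x ^ (α - 2) - m) x := by
    intro x hx
    have h1 : HasDerivAt (fun x : ℝ => x ^ (α - 1)) ((α - 1) * x ^ (α - 1 - 1)) x :=
      Real.hasDerivAt_rpow_const (Or.inl hx)
    have h2 : HasDerivAt (fun x : ℝ => x - q) 1 x := (hasDerivAt_id x).sub_const q
    have h4 := (h1.const_sub (q ^ (α - 1))).sub (h2.const_mul m)
    refine h4.congr_deriv ?_
    have : α - 1 - 1 = α - 2 := by ring
    rw [this]; ring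
  -- g' is monotone on (0, M]
  have hmono' : MonotoneOn g' (Set.Ioc 0 M) := by
    apply monotoneOn_of_deriv_nonneg (convex_Ioc 0 M)
    · intro x hx
      exact ((hderiv' x (ne_of_gt hx.1)).continuousAt).continuousWithinAt
    · intro x hx
      rw [interior_Ioc] at hx
      exact ((hderiv' x (ne_of_gt hx.1)).differentiableAt).differentiableWithinAt
    · intro x hx
      rw [interior_Ioc] at hx
      rw [(hderiv' x (ne_of_gt hx.1)).deriv]
      have hx2 : x ^ (2 - α) ≤ M ^ (2 - α) :=
        Real.rpow_le_rpow hx.1.le hx.2.le (by linarith)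
      have hxp : (0:ℝ) < x ^ (2 - α) := Real.rpow_pos_of_pos hx.1 _
      have e1 : x ^ (α - 2) = (x ^ (2 - α))⁻¹ := by
        rw [← Real.rpow_neg hx.1.le]; ring_nf
      have e2 : M ^ (α - 2) = (M ^ (2 - α))⁻¹ := by
        rw [← Real.rpow_neg hM.le]; ring_nf
      have h5 : M ^ (α - 2) ≤ x ^ (α - 2) := by
        rw [e1, e2]
        exact inv_anti₀ hxp hx2
      rw [hm]
      nlinarith
  have hg'q : g' q = 0 := by simp [hg']
  -- continuity of g everywhere
  have hgcont : Continuous g := by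
    have h1 : Continuous fun x : ℝ => x ^ α := by
      apply continuous_iff_continuousAt.2
      intro x
      exact Real.continuousAt_rpow_const x α (Or.inr hα0.le)
    fun_prop
  -- g antitone on [0, q]
  have hanti : AntitoneOn g (Set.Icc 0 q) := by
    apply antitoneOn_of_deriv_nonpos (convex_Icc 0 q) hgcont.continuousOn
    · intro x hx
      rw [interior_Icc] at hx
      exact ((hderiv x (ne_of_gt hx.1)).differentiableAt).differentiableWithinAt
    · intro x hx
      rw [interior_Icc] at hx
      rw [(hderiv x (ne_of_gt hx.1)).deriv]
      have := hmono' ⟨hx.1, le_trans hx.2.le hqM⟩ ⟨hq, hqM⟩ hx.2.le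
      rw [hg'q] at this; exact this
  -- g monotone on [q, M]
  have hmonog : MonotoneOn g (Set.Icc q M) := by
    apply monotoneOn_of_deriv_nonneg (convex_Icc q M) hgcont.continuousOn
    · intro x hx
      rw [interior_Icc] at hx
      exact ((hderiv x (ne_of_gt (lt_trans hq hx.1))).differentiableAt).differentiableWithinAt
    · intro x hx
      rw [interior_Icc] at hx
      rw [(hderiv x (ne_of_gt (lt_trans hq hx.1))).deriv]
      have := hmono' ⟨hq, hqM⟩ ⟨lt_trans hq hx.1, hx.2.le⟩ hx.1.le
      rw [hg'q] at this; exact this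
  have hgq : g q = 0 := by simp [hg]
  intro u hu
  have hgu : 0 ≤ g u := by
    rcases le_total u q with hc | hc
    · have := hanti ⟨hu.1, hc⟩ ⟨hq.le, le_refl q⟩ hc
      rw [hgq] at this; exact this
    · have := hmonog ⟨le_refl q, hqM⟩ ⟨hc, hu.2⟩ hc
      rw [hgq] at this; exact this
  simp only [hg] at hgu
  linarith

set_option maxHeartbeats 1000000 in
/-- **Lemma 21 (coordinate-wise stability bound).**
For `α ∈ (0,1)`, `β > 4/(1−α)`, `d ≥ 1`, `h ∈ [−1,1]`, `q ∈ (0,1)`,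
`p ≥ q/2`, `p > 0`, with `f₁(u) = −u^α/α` and
`f₂(u) = (1−u)ln(1−u) + u`, and their Bregman divergences written explicitly
(`f₁'(q) = −q^{α−1}`, `f₂'(q) = −ln(1−q)`): for all `u₁ ∈ [0,dq]`, `u₂ ∈ [0,1)`,
`min{(h/p)(q−u₁) − β d_{f₁}(u₁,q), (h/p)(q−u₂) − β d_{f₂}(u₂,q)}
  ≤ (d^{2−α} h²/(β p²)) · min{q^{2−α}/(2(1−α)), 1−q}`. -/
theorem stmt12 {α β d h q p : ℝ}
    (hα : α ∈ Set.Ioo (0:ℝ) 1) (hβ : 4 / (1 - α) < β) (hd : 1 ≤ d)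
    (hh : h ∈ Set.Icc (-1:ℝ) 1) (hq : q ∈ Set.Ioo (0:ℝ) 1)
    (hpq : q / 2 ≤ p) (hp : 0 < p) :
    ∀ u₁ ∈ Set.Icc (0:ℝ) (d * q), ∀ u₂ ∈ Set.Ico (0:ℝ) 1,
      min ((h / p) * (q - u₁) -
            β * ((-(u₁ ^ α) / α) - (-(q ^ α) / α) - (-(q ^ (α - 1))) * (u₁ - q)))
          ((h / p) * (q - u₂) -
            β * (((1 - u₂) * Real.log (1 - u₂) + u₂)
              - ((1 - q) * Real.log (1 - q) + q) - (-(Real.log (1 - q))) * (u₂ - q)))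
        ≤ (d ^ (2 - α) * h ^ 2 / (β * p ^ 2)) *
            min (q ^ (2 - α) / (2 * (1 - α))) (1 - q) := by
  obtain ⟨hα0, hα1⟩ := hα
  obtain ⟨hq0, hq1⟩ := hq
  obtain ⟨hh1, hh2⟩ := hh
  have h1α : 0 < 1 - α := by linarith
  have hβ0 : 0 < β := lt_trans (by positivity) hβ
  have hd0 : 0 < d := lt_of_lt_of_le one_pos hd
  have hdq : 0 < d * q := by positivity
  intro u₁ hu₁ u₂ hu₂
  -- Case A bound
  have hA : (h / p) * (q - u₁) -
        β * ((-(u₁ ^ α) / α) - (-(q ^ α) / α) - (-(q ^ (α - 1))) * (u₁ - q))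
      ≤ (d ^ (2 - α) * h ^ 2 / (β * p ^ 2)) * (q ^ (2 - α) / (2 * (1 - α))) := by
    set m : ℝ := (1 - α) * (d * q) ^ (α - 2) with hm
    have hmp : 0 < m := by
      have := Real.rpow_pos_of_pos hdq (α - 2)
      positivity
    have key := breg1_lower hα0 hα1 hq0 (le_mul_of_one_le_left hq0.le hd) u₁ hu₁
    have hD : m * (u₁ - q) ^ 2 / 2
        ≤ (-(u₁ ^ α) / α - (-(q ^ α) / α) - (-(q ^ (α - 1))) * (u₁ - q)) := by
      have e : (-(u₁ ^ α) / α - (-(q ^ α) / α) - (-(q ^ (α - 1))) * (u₁ - q))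
          = q ^ α / α - u₁ ^ α / α + q ^ (α - 1) * (u₁ - q) := by ring
      rw [e]; exact key
    have step1 : (h / p) * (q - u₁) -
        β * ((-(u₁ ^ α) / α) - (-(q ^ α) / α) - (-(q ^ (α - 1))) * (u₁ - q))
        ≤ (h / p) * (q - u₁) - β * (m * (u₁ - q) ^ 2 / 2) := by
      have := mul_le_mul_of_nonneg_left hD hβ0.le
      linarith
    have step2 : (h / p) * (q - u₁) - β * (m * (u₁ - q) ^ 2 / 2)
        ≤ (h / p) ^ 2 / (2 * (β * m)) := by
      rw [le_div_iff₀ (by positivity)]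
      nlinarith [sq_nonneg (h / p - β * m * (q - u₁))]
    have e1 : (d * q) ^ (α - 2) = ((d * q) ^ (2 - α))⁻¹ := by
      rw [← Real.rpow_neg hdq.le]
      congr 1; ring
    have e2 : (d * q) ^ (2 - α) = d ^ (2 - α) * q ^ (2 - α) :=
      Real.mul_rpow hd0.le hq0.le
    have hXp : 0 < d ^ (2 - α) := Real.rpow_pos_of_pos hd0 _
    have hYp : 0 < q ^ (2 - α) := Real.rpow_pos_of_pos hq0 _
    have eqR : (h / p) ^ 2 / (2 * (β * m))
        = (d ^ (2 - α) * h ^ 2 / (β * p ^ 2)) * (q ^ (2 - α) / (2 * (1 - α))) := by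
      rw [hm, e1, e2]
      field_simp
    linarith [step1, step2, eqR ▸ step2]
  rcases le_total (q ^ (2 - α) / (2 * (1 - α))) (1 - q) with hcc | hcc
  · rw [min_eq_left hcc]
    exact le_trans (min_le_left _ _) hA
  · rw [min_eq_right hcc]
    -- Case B bound
    have hu2a := hu₂.1
    have hu2b := hu₂.2
    set t : ℝ := h / (β * p) with hts
    have hhp : h / p = β * t := by rw [hts]; field_simp
    have hq2 : q ^ (2 - α) ≤ q := by
      calc q ^ (2 - α) ≤ q ^ (1:ℝ) :=
            Real.rpow_le_rpow_of_exponent_ge hq0 hq1.le (by linarith)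
        _ = q := Real.rpow_one q
    have hqlb : 2 * (1 - α) * (1 - q) ≤ q := by
      have := (le_div_iff₀ (by positivity : (0:ℝ) < 2 * (1 - α))).1 hcc
      nlinarith
    have hβ4 : 4 < β * (1 - α) := by
      have := (div_lt_iff₀ h1α).1 hβ
      linarith
    have hβp1 : 1 ≤ β * p := by
      nlinarith [mul_le_mul_of_nonneg_left hpq hβ0.le, mul_pos hβ0 hq0,
        mul_le_mul_of_nonneg_left hqlb hβ0.le]
    have htb : |t| ≤ 1 := by
      rw [hts, abs_div, abs_of_pos (by positivity : (0:ℝ) < β * p)]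
      rw [div_le_one (by positivity)]
      calc |h| ≤ 1 := abs_le.2 ⟨hh1, hh2⟩
        _ ≤ β * p := hβp1
    have hexp := exp_quad htb
    have hpoint := breg2_point (t := t) (show (0:ℝ) < 1 - u₂ by linarith) (show (0:ℝ) < 1 - q by linarith)
    have hd1 : (1:ℝ) ≤ d ^ (2 - α) := Real.one_le_rpow hd (by linarith)
    have eC : d ^ (2 - α) * h ^ 2 / (β * p ^ 2) = d ^ (2 - α) * β * t ^ 2 := by
      rw [hts]; field_simp
    have s1 : β * (t * ((1 - u₂) - (1 - q)) -
        ((1 - u₂) * (Real.log (1 - u₂) - Real.log (1 - q)) + ((1 - q) - (1 - u₂))))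
        ≤ β * ((1 - q) * (Real.exp t - 1 - t)) :=
      mul_le_mul_of_nonneg_left hpoint hβ0.le
    have s2 : (1 - q) * (Real.exp t - 1 - t) ≤ (1 - q) * t ^ 2 :=
      mul_le_mul_of_nonneg_left hexp (by linarith)
    have s3 : β * ((1 - q) * t ^ 2) ≤ d ^ (2 - α) * β * t ^ 2 * (1 - q) := by
      nlinarith [mul_le_mul_of_nonneg_right hd1
        (mul_nonneg (mul_nonneg hβ0.le (sq_nonneg t)) (by linarith : (0:ℝ) ≤ 1 - q))]
    have s1' : β * ((1 - q) * (Real.exp t - 1 - t)) ≤ β * ((1 - q) * t ^ 2) :=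
      mul_le_mul_of_nonneg_left s2 hβ0.le
    refine le_trans (min_le_right _ _) ?_
    rw [hhp, eC]
    have eL : β * t * (q - u₂) -
        β * ((1 - u₂) * Real.log (1 - u₂) + u₂ - ((1 - q) * Real.log (1 - q) + q)
          - (-(Real.log (1 - q))) * (u₂ - q))
        = β * (t * ((1 - u₂) - (1 - q)) -
          ((1 - u₂) * (Real.log (1 - u₂) - Real.log (1 - q)) + ((1 - q) - (1 - u₂)))) := by
      ring
    rw [eL]
    linarith [s1, s1', s3]
end

section
/- Let α ∈ (0,1) and p ∈ (0,1]. Then p^{1+α} · min( p^{−α}, (1 − p)/p² ) ≤ 2·min(p, 1 − p). -/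
/-- **Lemma 23.** For `α ∈ (0,1)` and `p ∈ (0,1]`,
`p^{1+α} · min(p^{−α}, (1−p)/p²) ≤ 2·min(p, 1−p)`. -/
theorem stmt13 (α p : ℝ) (hα : α ∈ Set.Ioo (0:ℝ) 1) (hp : p ∈ Set.Ioc (0:ℝ) 1) :
    p ^ (1 + α) * min (p ^ (-α)) ((1 - p) / p ^ 2) ≤ 2 * min p (1 - p) := by
  obtain ⟨hα0, hα1⟩ := hα
  obtain ⟨hp0, hp1⟩ := hp
  have hpow : (0:ℝ) < p ^ (1 + α) := Real.rpow_pos_of_pos hp0 _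
  rcases le_total p (1/2) with hc | hc
  · -- LHS ≤ p^(1+α)*p^(-α) = p ≤ 2p = 2 min
    have h1 : p ^ (1 + α) * min (p ^ (-α)) ((1 - p) / p ^ 2)
        ≤ p ^ (1 + α) * p ^ (-α) :=
      mul_le_mul_of_nonneg_left (min_le_left _ _) hpow.le
    have h2 : p ^ (1 + α) * p ^ (-α) = p := by
      rw [← Real.rpow_add hp0]; norm_num
    have hmin : min p (1 - p) = p := min_eq_left (by linarith)
    rw [hmin]
    calc p ^ (1 + α) * min (p ^ (-α)) ((1 - p) / p ^ 2) ≤ p := h1.trans_eq h2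
    _ ≤ 2 * p := by linarith
  · -- LHS ≤ p^(1+α)*(1-p)/p^2 = (1-p)*p^(α-1) ≤ 2(1-p)
    have h1 : p ^ (1 + α) * min (p ^ (-α)) ((1 - p) / p ^ 2)
        ≤ p ^ (1 + α) * ((1 - p) / p ^ 2) :=
      mul_le_mul_of_nonneg_left (min_le_right _ _) hpow.le
    have h2 : p ^ (1 + α) * ((1 - p) / p ^ 2) = (1 - p) * p ^ (α - 1) := by
      have hsq : p ^ (1 + α) = p ^ (α - 1) * p ^ 2 := by
        rw [← Real.rpow_natCast p 2, ← Real.rpow_add hp0]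
        norm_num
        congr 1
        ring
      rw [hsq]
      field_simp
    have h3 : p ^ (α - 1) ≤ 2 := by
      have hle : p ^ (α - 1) ≤ (1/2 : ℝ) ^ (α - 1) := by
        exact Real.rpow_le_rpow_of_nonpos (by norm_num) hc (by linarith)
      have h4 : ((1:ℝ)/2) ^ (α - 1) = 2 ^ (1 - α) := by
        rw [one_div, Real.inv_rpow (by norm_num), ← Real.rpow_neg (by norm_num)]
        congr 1
        ring
      have h5 : (2:ℝ) ^ (1 - α) ≤ 2 ^ (1:ℝ) := by
        apply Real.rpow_le_rpow_of_exponent_le (by norm_num) (by linarith)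
      rw [h4] at hle
      exact hle.trans (by simpa using h5)
    have hmin : min p (1 - p) = 1 - p := min_eq_right (by linarith)
    rw [hmin]
    calc p ^ (1 + α) * min (p ^ (-α)) ((1 - p) / p ^ 2)
        ≤ (1 - p) * p ^ (α - 1) := h1.trans_eq h2
    _ ≤ (1 - p) * 2 := mul_le_mul_of_nonneg_left h3 (by linarith)
    _ = 2 * (1 - p) := by ring
end

section
/- Let K ≥ 3, α ∈ (0,1), γ ≥ 6, R ∈ ℝ^K, h ∈ [−1,1]. Fix ω ∈ (1,2] and suppose β ≥ 4K/((ω−1)(1−ω^{α−1})). Let S ⊆ [K] with 1 ∈ S, and let e_S ∈ {0,1}^K be its indicator vector. Suppose x minimizes F_{−R,β,γ} and y minimizes F_{−R+(h/x'_1)e_1 − h·e_S, β, γ}, where x_1 ≤ x'_1 ≤ 1 and x'_1 > 0. Then y_i ≤ 4·x_i for all i ∈ [K]. -/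
set_option maxHeartbeats 1000000


open Finset

/-- First-order (KKT) condition for a minimizer of the hybrid FTRL objective
over the positive simplex: the "gradient" is constant across coordinates. -/
lemma kkt_eq {K : ℕ} {α β γ : ℝ} (hα : 0 < α) (L p : Fin K → ℝ)
    (hp : MinimizesF α β γ L p) (i j : Fin K) :
    L i - β * p i ^ (α - 1) - γ / p i = L j - β * p j ^ (α - 1) - γ / p j := by
  rcases eq_or_ne i j with rfl | hij
  · rfl
  obtain ⟨⟨hpos, hsum⟩, hmin⟩ := hp
  set δ : Fin K → ℝ := fun k => (if k = i then 1 else 0) - (if k = j then 1 else 0) with hδ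
  have hδi : δ i = 1 := by simp [hδ, hij]
  have hδj : δ j = -1 := by simp [hδ, Ne.symm hij]
  have hδo : ∀ k, k ≠ i → k ≠ j → δ k = 0 := by intro k h1 h2; simp [hδ, h1, h2]
  have hsumδ : ∀ f : Fin K → ℝ, ∑ k, δ k * f k = f i - f j := by
    intro f
    simp [hδ, sub_mul, ite_mul, one_mul, zero_mul, Finset.sum_sub_distrib]
  set m := min (p i) (p j) with hm
  have hm0 : 0 < m := lt_min (hpos i) (hpos j)
  -- the perturbed points are in the positive simplex
  have hqs : ∀ t : ℝ, |t| < m → posSimplex (fun k => p k + δ k * t) := by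
    intro t ht
    obtain ⟨ht1, ht2⟩ := abs_lt.mp ht
    have hmi : m ≤ p i := min_le_left _ _
    have hmj : m ≤ p j := min_le_right _ _
    constructor
    · intro k
      show 0 < p k + δ k * t
      by_cases hk1 : k = i
      · subst hk1; rw [hδi]; linarith
      · by_cases hk2 : k = j
        · subst hk2; rw [hδj]; linarith
        · rw [hδo k hk1 hk2]; simpa using hpos k
    · show ∑ k, (p k + δ k * t) = 1
      rw [Finset.sum_add_distrib, hsum, hsumδ (fun _ => t)]
      ring
  -- derivative of each coordinate
  have hA : ∀ k : Fin K, HasDerivAt (fun t : ℝ => p k + δ k * t) (δ k) 0 := by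
    intro k
    simpa using (((hasDerivAt_id (0 : ℝ)).const_mul (δ k)).const_add (p k))
  have h1 : HasDerivAt (fun t : ℝ => ∑ k, L k * (p k + δ k * t)) (∑ k, L k * δ k) 0 :=
    HasDerivAt.fun_sum fun k _ => (hA k).const_mul (L k)
  have h2 : HasDerivAt (fun t : ℝ => ∑ k, (p k + δ k * t) ^ α)
      (∑ k, δ k * α * p k ^ (α - 1)) 0 := by
    refine HasDerivAt.fun_sum fun k _ => ?_
    have h := (hA k).rpow_const (p := α) (Or.inl (by simpa using (hpos k).ne'))
    simpa using h
  have h3 : HasDerivAt (fun t : ℝ => ∑ k, Real.log (p k + δ k * t)) (∑ k, δ k / p k) 0 := by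
    refine HasDerivAt.fun_sum fun k _ => ?_
    have h := (hA k).log (by simpa using (hpos k).ne')
    simpa using h
  have hg : HasDerivAt (fun t : ℝ => hybridF α β γ L (fun k => p k + δ k * t))
      ((∑ k, L k * δ k) + (β / α) * (0 - ∑ k, δ k * α * p k ^ (α - 1))
        - γ * ∑ k, δ k / p k) 0 := by
    have := (h1.fun_add (((hasDerivAt_const (0 : ℝ) (1 : ℝ)).fun_sub h2).const_mul (β / α))).fun_sub
      (h3.const_mul γ)
    simpa [hybridF] using this
  have hq0 : (fun k => p k + δ k * (0 : ℝ)) = p := funext fun k => by ring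
  have hloc : IsLocalMin (fun t : ℝ => hybridF α β γ L (fun k => p k + δ k * t)) 0 := by
    filter_upwards [Metric.ball_mem_nhds (0 : ℝ) hm0] with t ht
    have ht' : |t| < m := by simpa [Real.dist_eq] using ht
    have := hmin (fun k => p k + δ k * t) (hqs t ht')
    simpa [hq0] using this
  have hD := hloc.hasDerivAt_eq_zero hg
  -- compute the three sums
  have e1 : ∑ k, L k * δ k = L i - L j := by
    rw [Finset.sum_congr rfl fun k _ => mul_comm (L k) (δ k)]
    exact hsumδ L
  have e2 : ∑ k, δ k * α * p k ^ (α - 1) = α * p i ^ (α - 1) - α * p j ^ (α - 1) := by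
    rw [Finset.sum_congr rfl fun k _ => mul_assoc (δ k) α (p k ^ (α - 1))]
    exact hsumδ (fun k => α * p k ^ (α - 1))
  have e3 : ∑ k, δ k / p k = (p i)⁻¹ - (p j)⁻¹ := by
    rw [Finset.sum_congr rfl fun k _ => div_eq_mul_inv (δ k) (p k)]
    exact hsumδ (fun k => (p k)⁻¹)
  rw [e1, e2, e3] at hD
  have hα0 : α ≠ 0 := ne_of_gt hα
  have expand : (β / α) * (0 - (α * p i ^ (α - 1) - α * p j ^ (α - 1)))
      = β * p j ^ (α - 1) - β * p i ^ (α - 1) := by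
    field_simp
    ring
  have expand2 : γ * ((p i)⁻¹ - (p j)⁻¹) = γ / p i - γ / p j := by
    rw [mul_sub, ← div_eq_mul_inv, ← div_eq_mul_inv]
  rw [expand, expand2] at hD
  linarith

/-- **Stability for the sleeping-bandits FTRL update (Lemma 25).**
Fix `ω ∈ (1,2]`, `β ≥ 4K/((ω−1)(1−ω^{α−1}))`, `γ ≥ 6`, `h ∈ [−1,1]`,
`S ⊆ [K]` with `1 ∈ S`.  If `x` minimizes `F_{−R,β,γ}` and `y` minimizes
`F_{−R+(h/x'₁)e₁−h·e_S,β,γ}`, where `0 < x₁ ≤ x'₁ ≤ 1`, then `yᵢ ≤ 4xᵢ`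
for all `i`. -/
theorem stmt16 {K : ℕ} (hK : 3 ≤ K) (α β γ h ω x1' : ℝ)
    (hα : α ∈ Set.Ioo (0:ℝ) 1) (hγ : 6 ≤ γ)
    (hω : ω ∈ Set.Ioc (1:ℝ) 2)
    (hβ : 4 * K / ((ω - 1) * (1 - ω ^ (α - 1))) ≤ β)
    (hh : h ∈ Set.Icc (-1:ℝ) 1)
    (R x y : Fin K → ℝ) (S : Finset (Fin K)) (hS : (⟨0, by omega⟩ : Fin K) ∈ S)
    (hx1 : x ⟨0, by omega⟩ ≤ x1') (hx1' : x1' ≤ 1) (hx1'' : 0 < x1')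
    (hx : MinimizesF α β γ (fun i => -R i) x)
    (hy : MinimizesF α β γ
      (fun i => -R i + (h / x1') * (if (i : ℕ) = 0 then 1 else 0)
        - h * (if i ∈ S then 1 else 0)) y) :
    ∀ i, y i ≤ 4 * x i := by
  obtain ⟨hα1, hα2⟩ := hα
  obtain ⟨hω1, hω2⟩ := hω
  obtain ⟨hh1, hh2⟩ := hh
  -- basic positivity facts
  have hxpos : ∀ k, 0 < x k := hx.1.1
  have hypos : ∀ k, 0 < y k := hy.1.1
  have hxsum : ∑ k, x k = 1 := hx.1.2
  have hysum : ∑ k, y k = 1 := hy.1.2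
  have hxle1 : ∀ k, x k ≤ 1 := by
    intro k
    rw [← hxsum]
    exact Finset.single_le_sum (fun j _ => (hxpos j).le) (Finset.mem_univ k)
  have hKpos : (0:ℝ) < (K : ℝ) := by exact_mod_cast (by omega : 0 < K)
  have hK3 : (3:ℝ) ≤ (K : ℝ) := by exact_mod_cast hK
  -- β facts
  have hωa : ω ^ (α - 1) < 1 := Real.rpow_lt_one_of_one_lt_of_neg hω1 (by linarith)
  have hden : 0 < (ω - 1) * (1 - ω ^ (α - 1)) := mul_pos (by linarith) (by linarith)
  have h4K : 4 * (K:ℝ) ≤ β * ((ω - 1) * (1 - ω ^ (α - 1))) := (div_le_iff₀ hden).mp hβ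
  have hβ0 : 0 ≤ β := le_trans (div_pos (by linarith) hden).le hβ
  have hβω : 12 ≤ β * (1 - ω ^ (α - 1)) := by
    nlinarith [mul_nonneg (mul_nonneg hβ0 (by linarith : (0:ℝ) ≤ 1 - ω ^ (α - 1)))
      (by linarith : (0:ℝ) ≤ 2 - ω)]
  -- monotonicity of φ(a) = β a^(α-1) + γ/a
  have mono : ∀ a b : ℝ, 0 < a → a ≤ b →
      β * b ^ (α - 1) + γ / b ≤ β * a ^ (α - 1) + γ / a := by
    intro a b ha hab
    have h1 : b ^ (α - 1) ≤ a ^ (α - 1) :=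
      Real.rpow_le_rpow_of_nonpos ha hab (by linarith)
    have h2 : γ / b ≤ γ / a := by
      apply div_le_div_of_nonneg_left (by linarith) ha hab
    nlinarith [mul_le_mul_of_nonneg_left h1 hβ0]
  -- the key gap estimate
  have gap : ∀ a b : ℝ, 0 < a → a ≤ 1 → 4 * a < b →
      (9/2) / a + 12 ≤ (β * a ^ (α - 1) + γ / a) - (β * b ^ (α - 1) + γ / b) := by
    intro a b ha ha1 hab
    have hb : 0 < b := by linarith
    have h1 : b ^ (α - 1) ≤ (4 * a) ^ (α - 1) :=
      Real.rpow_le_rpow_of_nonpos (by linarith) hab.le (by linarith)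
    have h2 : (4 * a) ^ (α - 1) = (4:ℝ) ^ (α - 1) * a ^ (α - 1) :=
      Real.mul_rpow (by norm_num) ha.le
    have h3 : 1 ≤ a ^ (α - 1) :=
      Real.one_le_rpow_of_pos_of_le_one_of_nonpos ha ha1 (by linarith)
    have h4 : (4:ℝ) ^ (α - 1) ≤ ω ^ (α - 1) :=
      Real.rpow_le_rpow_of_nonpos (by linarith) (by linarith) (by linarith)
    have e1 : β * b ^ (α - 1) ≤ β * ((4:ℝ) ^ (α - 1) * a ^ (α - 1)) := by
      rw [← h2]; exact mul_le_mul_of_nonneg_left h1 hβ0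
    have e2 : 0 ≤ β * (a ^ (α - 1) - 1) * (1 - (4:ℝ) ^ (α - 1)) :=
      mul_nonneg (mul_nonneg hβ0 (by linarith)) (by linarith)
    have e3 : β * (4:ℝ) ^ (α - 1) ≤ β * ω ^ (α - 1) := mul_le_mul_of_nonneg_left h4 hβ0
    have hA : 12 ≤ β * a ^ (α - 1) - β * b ^ (α - 1) := by nlinarith
    -- the log-barrier part
    have hB1 : γ / b ≤ γ / (4 * a) := by
      have h0 : 1 / b ≤ 1 / (4 * a) := one_div_le_one_div_of_le (by linarith) hab.le
      calc γ / b = γ * (1 / b) := by ring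
        _ ≤ γ * (1 / (4 * a)) := mul_le_mul_of_nonneg_left h0 (by linarith)
        _ = γ / (4 * a) := by ring
    have hB4 : γ / (4 * a) = (γ / a) / 4 := by rw [div_div, mul_comm]
    have hB : (9/2) / a ≤ γ / a - γ / b := by
      have h6 : 6 / a ≤ γ / a := (div_le_div_iff_of_pos_right ha).mpr hγ
      have h7 : γ / b ≤ (γ / a) / 4 := by rw [← hB4]; exact hB1
      have e1 : γ / a = γ * (1/a) := by ring
      have e2 : (6:ℝ) / a = 6 * (1/a) := by ring
      have e3 : (9/2) / a = (9/2) * (1/a) := by ring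
      linarith
    linarith
  -- KKT conditions
  have hK0 : 0 < K := by omega
  obtain ⟨i0, hi0v, hS0, hx10⟩ :
      ∃ i0 : Fin K, (i0 : ℕ) = 0 ∧ i0 ∈ S ∧ x i0 ≤ x1' :=
    ⟨⟨0, hK0⟩, rfl, hS, hx1⟩
  obtain ⟨Lx, hLxd⟩ : ∃ Lx : Fin K → ℝ, ∀ i, Lx i = -R i := ⟨_, fun i => rfl⟩
  obtain ⟨Ly, hLyd⟩ : ∃ Ly : Fin K → ℝ, ∀ i, Ly i
      = -R i + (h / x1') * (if (i : ℕ) = 0 then 1 else 0)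
        - h * (if i ∈ S then 1 else 0) := ⟨_, fun i => rfl⟩
  have hxK : ∀ k, Lx k - β * x k ^ (α - 1) - γ / x k
      = Lx i0 - β * x i0 ^ (α - 1) - γ / x i0 := by
    intro k
    rw [hLxd k, hLxd i0]
    exact kkt_eq hα1 _ x hx k i0
  have hyK : ∀ k, Ly k - β * y k ^ (α - 1) - γ / y k
      = Ly i0 - β * y i0 ^ (α - 1) - γ / y i0 := by
    intro k
    rw [hLyd k, hLyd i0]
    exact kkt_eq hα1 _ y hy k i0
  obtain ⟨Δ, hΔdef⟩ : ∃ d : ℝ, d = (Ly i0 - β * y i0 ^ (α - 1) - γ / y i0)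
      - (Lx i0 - β * x i0 ^ (α - 1) - γ / x i0) := ⟨_, rfl⟩
  have ident : ∀ k, (β * x k ^ (α - 1) + γ / x k) - (β * y k ^ (α - 1) + γ / y k)
      = Δ - (Ly k - Lx k) := by
    intro k
    have h1 := hxK k
    have h2 := hyK k
    rw [hΔdef]
    linarith
  -- bounds on the loss differences
  have hvne : ∀ k : Fin K, k ≠ i0 → (k : ℕ) ≠ 0 := by
    intro k hk hk0
    exact hk (Fin.ext (by rw [hk0, hi0v]))
  have hl1 : ∀ k : Fin K, (k : ℕ) ≠ 0 → -1 ≤ Ly k - Lx k ∧ Ly k - Lx k ≤ 1 := by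
    intro k hk
    rw [hLyd k, hLxd k, if_neg hk]
    by_cases hkS : k ∈ S
    · rw [if_pos hkS]
      have e : -R k + h / x1' * 0 - h * 1 - -R k = -h := by ring
      rw [e]
      exact ⟨by linarith, by linarith⟩
    · rw [if_neg hkS]
      have e : -R k + h / x1' * 0 - h * 0 - -R k = 0 := by ring
      rw [e]
      exact ⟨by linarith, by linarith⟩
  have hl0eq : Ly i0 - Lx i0 = h / x1' - h := by
    rw [hLyd i0, hLxd i0, if_pos hi0v, if_pos hS0]
    ring
  have hinv1 : 1 ≤ 1 / x1' := one_le_one_div hx1'' hx1'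
  have hinv2 : 1 / x1' ≤ 1 / x i0 := one_div_le_one_div_of_le (hxpos i0) hx10
  have l0le : h / x1' - h ≤ 1 / x1' - 1 := by
    have h0 : (0:ℝ) ≤ 1 / x1' - 1 := by linarith
    have := mul_le_mul_of_nonneg_right hh2 h0
    have hexp : h * (1 / x1' - 1) = h / x1' - h := by ring
    linarith
  have l0ge : 1 - 1 / x i0 ≤ h / x1' - h := by
    have h0 : (0:ℝ) ≤ 1 / x1' - 1 := by linarith
    have h5 := mul_le_mul_of_nonneg_right hh1 h0
    have hexp : h * (1 / x1' - 1) = h / x1' - h := by ring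
    have hexp2 : (-1) * (1 / x1' - 1) = 1 - 1 / x1' := by ring
    linarith
  -- there is a coordinate where y does not increase
  have hexj : ∃ j, y j ≤ x j := by
    by_contra hno
    push_neg at hno
    have : ∑ k, x k < ∑ k, y k :=
      Finset.sum_lt_sum_of_nonempty ⟨i0, Finset.mem_univ i0⟩ (fun j _ => hno j)
    rw [hxsum, hysum] at this
    exact lt_irrefl 1 this
  -- main argument
  intro i
  by_contra hcon
  push_neg at hcon
  have hgap_i := gap (x i) (y i) (hxpos i) (hxle1 i) hcon
  have hident_i := ident i
  -- Δ is large
  have hΔgt1 : 1 < Δ := by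
    by_cases hi : i = i0
    · rw [hi] at hident_i hgap_i
      rw [hl0eq] at hident_i
      have hpos0 : 0 < 1 / x i0 := one_div_pos.mpr (hxpos i0)
      have h45 : (9/2) / x i0 = (9/2) * (1 / x i0) := by ring
      linarith
    · have hb := (hl1 i (hvne i hi)).1
      have hpos0 : 0 < (9/2) / x i := div_pos (by norm_num) (hxpos i)
      linarith
  obtain ⟨j, hj⟩ := hexj
  have hji0 : j = i0 := by
    by_contra hne
    have h1 := (hl1 j (hvne j hne)).2
    have h2 : (β * x j ^ (α - 1) + γ / x j) - (β * y j ^ (α - 1) + γ / y j) ≤ 0 := by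
      have := mono (y j) (x j) (hypos j) hj
      linarith
    have h3 := ident j
    linarith
  rw [hji0] at hj
  -- upper bound on Δ
  have hΔle : Δ ≤ 1 / x1' - 1 := by
    have h2 : (β * x i0 ^ (α - 1) + γ / x i0) - (β * y i0 ^ (α - 1) + γ / y i0) ≤ 0 := by
      have := mono (y i0) (x i0) (hypos i0) hj
      linarith
    have h3 := ident i0
    rw [hl0eq] at h3
    linarith
  by_cases hi : i = i0
  · rw [hi] at hcon
    have := hxpos i0
    linarith
  · -- every coordinate other than i0 strictly increases
    have hall : ∀ k : Fin K, k ≠ i0 → x k < y k := by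
      intro k hk
      by_contra hle
      push_neg at hle
      have h2 : (β * x k ^ (α - 1) + γ / x k) - (β * y k ^ (α - 1) + γ / y k) ≤ 0 := by
        have := mono (y k) (x k) (hypos k) hle
        linarith
      have h3 := ident k
      have h4 := (hl1 k (hvne k hk)).2
      linarith
    have hsum_erase : ∑ k ∈ Finset.univ.erase i0, (y k - x k) = x i0 - y i0 := by
      have h1 := Finset.sum_erase_add Finset.univ (fun k => y k - x k) (Finset.mem_univ i0)
      beta_reduce at h1
      have h2 : ∑ k, (y k - x k) = 0 := by
        rw [Finset.sum_sub_distrib, hxsum, hysum]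
        ring
      rw [h2] at h1
      linarith
    have hsingle : y i - x i ≤ ∑ k ∈ Finset.univ.erase i0, (y k - x k) :=
      Finset.single_le_sum
        (fun k hk => le_of_lt (sub_pos.2 (hall k (Finset.ne_of_mem_erase hk))))
        (Finset.mem_erase.2 ⟨hi, Finset.mem_univ i⟩)
    have hxi_small : x i ≤ x1' / 3 := by
      have := hypos i0
      linarith [hsum_erase ▸ hsingle]
    have hfrac : (27/2) / x1' ≤ (9/2) / x i := by
      have h1 : 1 / (x1' / 3) ≤ 1 / x i := one_div_le_one_div_of_le (hxpos i) hxi_small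
      have h2 : 1 / (x1' / 3) = 3 / x1' := by
        rw [div_div_eq_mul_div, one_mul]
      calc (27/2) / x1' = (9/2) * (3 / x1') := by ring
        _ = (9/2) * (1 / (x1' / 3)) := by rw [h2]
        _ ≤ (9/2) * (1 / x i) := by linarith
        _ = (9/2) / x i := by ring
    have hbi := (hl1 i (hvne i hi)).1
    have hpos1 : 0 < 1 / x1' := one_div_pos.mpr hx1''
    have e1 : (27/2) / x1' = (27/2) * (1 / x1') := by ring
    have e2 : (9/2) / x i = (9/2) * (1 / x i) := by ring
    linarith
end

section
/- Let K ≥ 1, let q ∈ Δ_K have all coordinates strictly positive, let A ⊆ [K] be nonempty, let j ∈ A, let λ ∈ [−1,1] and c ∈ [0,1]. Define p_j = q_j / (Σ_{k∈A} q_k), and define r ∈ ℝ^K by r_j = λ·(1 − 1/p_j), r_i = λ for i ∈ A \ {j}, and r_i = 0 for i ∉ A. Then Σ_{i=1}^K q_i^{2−c} · r_i² ≤ 2 · (min(p_j, 1 − p_j))^{2−c} · (λ/p_j)². -/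
/-!
Write `e = 2 - c ∈ [1, 2]`, `p = p_j` and `m = min p (1 - p)`. Since
`(λ (1 - 1/p))² = (1 - p)² (λ/p)²` and `q_j ≤ p`, the drawn arm contributes at most
`p^e (1 - p)² (λ/p)²`. The other active arms have total mass `S (1 - p) ≤ 1 - p`, where
`S = ∑_{k ∈ A} q_k ≤ 1`, and `x ↦ x^e` is superadditive, so together they contribute at most
`(1 - p)^e λ² = p² (1 - p)^e (λ/p)²`. Both `p^e (1 - p)²` and `p² (1 - p)^e` are at most
`(p (1 - p))^e ≤ m^e`, since `x² ≤ x^e` on `[0, 1]`.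
-/

open Finset

theorem Real.sum_rpow_le_rpow_sum {ι : Type*} (s : Finset ι) {f : ι → ℝ}
    (hf : ∀ i ∈ s, 0 ≤ f i) {e : ℝ} (he : 1 ≤ e) :
    ∑ i ∈ s, f i ^ e ≤ (∑ i ∈ s, f i) ^ e := by
  set T := ∑ i ∈ s, f i
  have hT : 0 ≤ T := sum_nonneg hf
  have split {x : ℝ} (hx : 0 ≤ x) : x ^ e = x ^ (e - 1) * x := by
    rw [← Real.rpow_add_one' hx (by linarith), sub_add_cancel]
  calc ∑ i ∈ s, f i ^ e
      ≤ ∑ i ∈ s, T ^ (e - 1) * f i := by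
        refine sum_le_sum fun i hi => ?_
        have hfi := hf i hi
        rw [split hfi]
        gcongr
        exact single_le_sum hf hi
    _ = T ^ e := by rw [← mul_sum, split hT]

theorem sq_mul_rpow_le_min_rpow {x e : ℝ} (hx0 : 0 ≤ x) (hx1 : x ≤ 1) (he0 : 0 ≤ e)
    (he2 : e ≤ 2) : x ^ 2 * (1 - x) ^ e ≤ (min x (1 - x)) ^ e := by
  have hx2 : x ^ 2 ≤ x ^ e := by
    rw [← Real.rpow_natCast]
    exact Real.rpow_le_rpow_of_exponent_ge' hx0 hx1 he0 (by norm_num [he2])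
  have hmin : x * (1 - x) ≤ min x (1 - x) :=
    le_min (by nlinarith) (by nlinarith)
  calc x ^ 2 * (1 - x) ^ e
      ≤ x ^ e * (1 - x) ^ e := by gcongr
    _ = (x * (1 - x)) ^ e := (Real.mul_rpow hx0 (by linarith)).symm
    _ ≤ (min x (1 - x)) ^ e := by gcongr

theorem rpow_mul_sq_le_min_rpow {x e : ℝ} (hx0 : 0 ≤ x) (hx1 : x ≤ 1) (he0 : 0 ≤ e)
    (he2 : e ≤ 2) : x ^ e * (1 - x) ^ 2 ≤ (min x (1 - x)) ^ e := by
  have := sq_mul_rpow_le_min_rpow (x := 1 - x) (by linarith) (by linarith) he0 he2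
  rwa [sub_sub_cancel, min_comm, mul_comm] at this

theorem weighted_sq_regret_self_le {qj p lam e : ℝ} (hqj : 0 ≤ qj) (hqp : qj ≤ p)
    (hp0 : 0 < p) (hp1 : p ≤ 1) (he0 : 0 ≤ e) (he2 : e ≤ 2) :
    qj ^ e * (lam * (1 - 1 / p)) ^ 2 ≤ (min p (1 - p)) ^ e * (lam / p) ^ 2 := by
  have hregret : (lam * (1 - 1 / p)) ^ 2 = (1 - p) ^ 2 * (lam / p) ^ 2 := by
    field_simp; ring
  calc qj ^ e * (lam * (1 - 1 / p)) ^ 2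
      ≤ p ^ e * (1 - p) ^ 2 * (lam / p) ^ 2 := by
        rw [hregret, ← mul_assoc]; gcongr
    _ ≤ (min p (1 - p)) ^ e * (lam / p) ^ 2 := by
        gcongr; exact rpow_mul_sq_le_min_rpow hp0.le hp1 he0 he2

theorem sum_weighted_sq_regret_others_le {ι : Type*} {s : Finset ι} {q : ι → ℝ}
    {p lam e : ℝ} (hq : ∀ i ∈ s, 0 ≤ q i) (hs : ∑ i ∈ s, q i ≤ 1 - p) (hp0 : 0 < p)
    (hp1 : p ≤ 1) (he1 : 1 ≤ e) (he2 : e ≤ 2) :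
    ∑ i ∈ s, q i ^ e * lam ^ 2 ≤ (min p (1 - p)) ^ e * (lam / p) ^ 2 := by
  calc ∑ i ∈ s, q i ^ e * lam ^ 2
      ≤ (∑ i ∈ s, q i) ^ e * lam ^ 2 := by
        rw [← sum_mul]; gcongr; exact Real.sum_rpow_le_rpow_sum s hq he1
    _ ≤ (1 - p) ^ e * lam ^ 2 := by gcongr; exact sum_nonneg hq
    _ = p ^ 2 * (1 - p) ^ e * (lam / p) ^ 2 := by field_simp
    _ ≤ (min p (1 - p)) ^ e * (lam / p) ^ 2 := by
        gcongr; exact sq_mul_rpow_le_min_rpow hp0.le hp1 (by linarith) he2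

theorem stmt17_general {K : ℕ} (q : Fin K → ℝ)
    (hq : (∀ i, 0 < q i) ∧ ∑ i, q i = 1)
    (A : Finset (Fin K)) (j : Fin K) (hj : j ∈ A)
    (lam c : ℝ) (hc : c ∈ Set.Icc (0:ℝ) 1)
    (pj : ℝ) (hpj : pj = q j / ∑ k ∈ A, q k)
    (r : Fin K → ℝ)
    (hr : ∀ i, r i = if i = j then lam * (1 - 1 / pj)
      else if i ∈ A then lam else 0) :
    ∑ i, q i ^ (2 - c) * (r i) ^ 2 ≤
      2 * (min pj (1 - pj)) ^ (2 - c) * (lam / pj) ^ 2 := by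
  obtain ⟨hqpos, hqsum⟩ := hq
  obtain ⟨hc0, hc1⟩ := hc
  set S := ∑ k ∈ A, q k
  have hqS : q j ≤ S := single_le_sum (fun i _ => (hqpos i).le) hj
  have hS0 : 0 < S := (hqpos j).trans_le hqS
  have hS1 : S ≤ 1 := hqsum ▸ sum_le_univ_sum_of_nonneg fun i => (hqpos i).le
  have hp0 : 0 < pj := hpj ▸ div_pos (hqpos j) hS0
  have hp1 : pj ≤ 1 := hpj ▸ (div_le_one hS0).2 hqS
  have hqp : q j ≤ pj := hpj ▸ le_div_self (hqpos j).le hS0 hS1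
  have hothers : ∑ i ∈ A.erase j, q i ≤ 1 - pj := by
    rw [sum_erase_eq_sub hj, show q j = pj * S by rw [hpj]; field_simp]
    linarith [mul_le_mul_of_nonneg_right hS1 (sub_nonneg.2 hp1)]
  have hsplit : ∑ i, q i ^ (2 - c) * r i ^ 2
      = q j ^ (2 - c) * (lam * (1 - 1 / pj)) ^ 2
        + ∑ i ∈ A.erase j, q i ^ (2 - c) * lam ^ 2 := by
    rw [← sum_subset (subset_univ A) fun i _ hi => by
          simp [hr i, hi, show i ≠ j by rintro rfl; exact hi hj],
      ← add_sum_erase A _ hj, hr j, if_pos rfl]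
    congr 1
    exact sum_congr rfl fun i hi => by simp [hr i, ne_of_mem_erase hi, mem_of_mem_erase hi]
  rw [hsplit]
  linarith [weighted_sq_regret_self_le (lam := lam) (hqpos j).le hqp hp0 hp1
      (by linarith : (0:ℝ) ≤ 2 - c) (by linarith),
    sum_weighted_sq_regret_others_le (lam := lam) (fun i _ => (hqpos i).le) hothers hp0 hp1
      (by linarith : (1:ℝ) ≤ 2 - c) (by linarith)]

/-- **Lemma 26 (sleeping bandits: bounding the weighted estimated regrets).**
Let `q ∈ Δ_K` have positive coordinates, `A ⊆ [K]` nonempty, `j ∈ A`,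
`λ ∈ [−1,1]`, `c ∈ [0,1]`, and set `p_j = q_j / Σ_{k∈A} q_k`.  With
`r_j = λ(1 − 1/p_j)`, `r_i = λ` for `i ∈ A∖{j}` and `r_i = 0` for `i ∉ A`,
`Σᵢ qᵢ^{2−c} rᵢ² ≤ 2·(min(p_j, 1−p_j))^{2−c}·(λ/p_j)²`. -/
theorem stmt17 {K : ℕ} (hK : 1 ≤ K) (q : Fin K → ℝ)
    (hq : (∀ i, 0 < q i) ∧ ∑ i, q i = 1)
    (A : Finset (Fin K)) (hA : A.Nonempty) (j : Fin K) (hj : j ∈ A)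
    (lam c : ℝ) (hlam : lam ∈ Set.Icc (-1:ℝ) 1) (hc : c ∈ Set.Icc (0:ℝ) 1)
    (pj : ℝ) (hpj : pj = q j / ∑ k ∈ A, q k)
    (r : Fin K → ℝ)
    (hr : ∀ i, r i = if i = j then lam * (1 - 1 / pj)
      else if i ∈ A then lam else 0) :
    ∑ i, q i ^ (2 - c) * (r i) ^ 2 ≤
      2 * (min pj (1 - pj)) ^ (2 - c) * (lam / pj) ^ 2 :=
  stmt17_general q hq A j hj lam c hc pj hpj r hr
end

section
/- Let S ≥ 1 and K be integers with e²·S ≤ K, and set α = 1 − 1/ln(K/S). Then α ≥ 1/2 and (K^{1−α} − 1)·S^α / (α(1−α)) ≤ 6·S·ln(K/S). -/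
/-!
Write `L = ln(K/S) ≥ 2`, so that `1 − α = 1/L`. Then `K^{1−α} S^α = S · (K/S)^{1/L} = e·S`, so the
numerator is at most `e·S`, while `α(1 − α) ≥ 1/(2L)` because `α ≥ 1/2`. Hence the quotient is at
most `2e·S·L ≤ 6·S·L`.
-/

open Real

lemma rpow_mul_rpow_one_sub_eq {S : ℝ} (hS : 0 < S) {K : ℝ} (hK : 0 ≤ K) (β : ℝ) :
    K ^ β * S ^ (1 - β) = S * (K / S) ^ β := by
  rw [div_rpow hK hS.le, rpow_sub hS, rpow_one]
  field_simp

lemma rpow_inv_log_div_mul_rpow_le {S : ℝ} (hS : 0 < S) {K : ℝ} (hK : 0 ≤ K) :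
    K ^ (log (K / S))⁻¹ * S ^ (1 - (log (K / S))⁻¹) ≤ exp 1 * S := by
  rw [rpow_mul_rpow_one_sub_eq hS hK, mul_comm (exp 1)]
  exact mul_le_mul_of_nonneg_left rpow_inv_log_le_exp_one hS.le

lemma two_le_log_div {S K : ℝ} (hS : 0 < S) (hSK : exp 2 * S ≤ K) : 2 ≤ log (K / S) := by
  have h : exp 2 ≤ K / S := (le_div_iff₀ hS).2 hSK
  exact (le_log_iff_exp_le ((exp_pos 2).trans_le h)).2 h

lemma one_half_le_one_sub_inv {L : ℝ} (hL : 2 ≤ L) : 1 / 2 ≤ 1 - L⁻¹ := by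
  have : L⁻¹ ≤ 2⁻¹ := inv_anti₀ two_pos hL
  linarith

lemma inv_two_mul_le_one_sub_inv_mul_inv {L : ℝ} (hL : 2 ≤ L) :
    (2 * L)⁻¹ ≤ (1 - L⁻¹) * L⁻¹ := by
  rw [mul_inv]
  exact mul_le_mul_of_nonneg_right (by simpa using one_half_le_one_sub_inv hL) (by positivity)

lemma sparsity_factor_le {S K : ℝ} (hS : 1 ≤ S) (hSK : exp 2 * S ≤ K) :
    (K ^ (log (K / S))⁻¹ - 1) * S ^ (1 - (log (K / S))⁻¹) /
        ((1 - (log (K / S))⁻¹) * (log (K / S))⁻¹) ≤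
      2 * exp 1 * S * log (K / S) := by
  set L := log (K / S)
  have hS₀ : 0 < S := one_pos.trans_le hS
  have hL : 2 ≤ L := two_le_log_div hS₀ hSK
  have hK1 : 1 ≤ K := by nlinarith [add_one_le_exp 2]
  have hnum : (K ^ L⁻¹ - 1) * S ^ (1 - L⁻¹) ≤ exp 1 * S := by
    have := rpow_inv_log_div_mul_rpow_le hS₀ (zero_le_one.trans hK1)
    have : 0 ≤ S ^ (1 - L⁻¹) := rpow_nonneg hS₀.le _
    nlinarith
  have hnum_nonneg : 0 ≤ (K ^ L⁻¹ - 1) * S ^ (1 - L⁻¹) := by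
    have : 1 ≤ K ^ L⁻¹ := one_le_rpow hK1 (by positivity)
    exact mul_nonneg (by linarith) (rpow_nonneg hS₀.le _)
  calc (K ^ L⁻¹ - 1) * S ^ (1 - L⁻¹) / ((1 - L⁻¹) * L⁻¹)
      ≤ (K ^ L⁻¹ - 1) * S ^ (1 - L⁻¹) / (2 * L)⁻¹ :=
        div_le_div_of_nonneg_left hnum_nonneg (by positivity)
          (inv_two_mul_le_one_sub_inv_mul_inv hL)
    _ ≤ exp 1 * S / (2 * L)⁻¹ := by gcongr
    _ = 2 * exp 1 * S * L := by field_simp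

/-- **Remark 1 (known sparsity `S`).** For integers `S ≥ 1`, `K` with
`e²·S ≤ K` and `α = 1 − 1/ln(K/S)`: `α ≥ 1/2` and
`(K^{1−α} − 1)·S^α/(α(1−α)) ≤ 6·S·ln(K/S)`. -/
theorem stmt19 (S K : ℕ) (hS : 1 ≤ S)
    (hSK : Real.exp 2 * (S : ℝ) ≤ (K : ℝ))
    (α : ℝ) (hα : α = 1 - 1 / Real.log ((K : ℝ) / S)) :
    1 / 2 ≤ α ∧
    ((K : ℝ) ^ (1 - α) - 1) * (S : ℝ) ^ α / (α * (1 - α)) ≤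
      6 * S * Real.log ((K : ℝ) / S) := by
  have hS : (1 : ℝ) ≤ S := by exact_mod_cast hS
  have hL := two_le_log_div (one_pos.trans_le hS) hSK
  rw [one_div] at hα
  subst hα
  refine ⟨one_half_le_one_sub_inv hL, ?_⟩
  rw [sub_sub_cancel]
  calc _ ≤ 2 * exp 1 * S * log ((K : ℝ) / S) := sparsity_factor_le hS hSK
    _ ≤ 6 * S * log ((K : ℝ) / S) := by
      have : 0 ≤ (S : ℝ) * log ((K : ℝ) / S) := by positivity
      nlinarith [exp_one_lt_three]
end
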